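/- arXiv:1309.7415 — 5 statements merged into one kernel-verified Lean document; each statement's English description precedes it below -/
import Mathlib

section
/- Let A : Sym(n) → ℝᵖ and B : Sym(n) → ℝ^q be linear maps, a ∈ ℝᵖ, b ∈ ℝ^q, and let C := {X ∈ S₊ⁿ : A(X) = a, B(X) ≤ b}. Suppose C contains a positive definite matrix. Let x̄ ∈ ℝⁿ be nonzero with x̄x̄ᵀ ∈ C, and let A_i := A*(e_i), B_j := B*(e_j). Then x̄x̄ᵀ is a vertex of C if and only if the set of vectors {A_i x̄ : 1 ≤ i ≤ p} ∪ {B_j x̄ : 1 ≤ j ≤ q, the j-th inequality is tight at x̄x̄ᵀ} spans ℝⁿ. -/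
open Matrix

/-- The normal cone, within the space of symmetric matrices (with the trace inner
product), of a set `C` of symmetric matrices at a point `X`. -/
def normalConeM {ι : Type*} [Fintype ι] (C : Set (Matrix ι ι ℝ)) (X : Matrix ι ι ℝ) :
    Set (Matrix ι ι ℝ) :=
  {c | c.IsSymm ∧ ∀ Y ∈ C, (c * Y).trace ≤ (c * X).trace}

/-- A point of a convex set of symmetric matrices is a vertex if its normal cone is
full-dimensional in the space `Sym(ι)` of symmetric matrices, whose dimension is
`card ι * (card ι + 1) / 2`. -/
def IsVertex {ι : Type*} [Fintype ι] (C : Set (Matrix ι ι ℝ)) (X : Matrix ι ι ℝ) : Prop :=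
  X ∈ C ∧ Module.finrank ℝ (Submodule.span ℝ (normalConeM C X))
      = Fintype.card ι * (Fintype.card ι + 1) / 2

/-!
Being a vertex means that the normal cone `N` at `x̄x̄ᵀ` spans `Sym(n)`. The cone `N` contains
the `A_i`, the `B_j` of the tight inequalities, and `-S` for every PSD `S` with `S x̄ = 0`; the
latter span all symmetric matrices killing `x̄`. So if the vectors `A_i x̄`, `B_j x̄` span `ℝⁿ`,
any symmetric `c` differs from a combination of constraint matrices by a matrix killing `x̄`,
and lies in the span of `N`.

Conversely, let `v ≠ 0` be orthogonal to all these vectors and `H = x̄vᵀ + vx̄ᵀ`, so that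
`⟨A_i, H⟩ = 0` and `⟨B_j, H⟩ = 0` for the tight `j`. Moving from `x̄x̄ᵀ` in direction `±H`
and correcting by a multiple of order `t²` of the Slater point `X₀` keeps the matrix PSD and
feasible, so every normal vector is orthogonal to `H`; since `H ≠ 0`, the normal cone is not
full-dimensional.
-/

open Filter Topology

namespace Matrix

section SymmetricSubmodule

variable (R ι : Type*) [CommSemiring R]

def symmetricSubmodule : Submodule R (Matrix ι ι R) where
  carrier := {M | M.IsSymm}
  add_mem' := IsSymm.add
  zero_mem' := isSymm_zero
  smul_mem' c _ hM := hM.smul c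

def symmetricSubmoduleEquivSym2 : symmetricSubmodule R ι ≃ₗ[R] (Sym2 ι → R) where
  toFun M := Sym2.lift ⟨fun i j => (M : Matrix ι ι R) i j, fun i j => M.2.apply j i⟩
  map_add' M N := by ext s; induction s using Sym2.ind; simp
  map_smul' c M := by ext s; induction s using Sym2.ind; simp
  invFun f := ⟨of fun i j => f s(i, j), by ext i j; simp [Sym2.eq_swap]⟩
  left_inv M := by ext i j; simp
  right_inv f := by ext s; induction s using Sym2.ind; simp

lemma finrank_symmetricSubmodule (K : Type*) [Field K] [Fintype ι] [DecidableEq ι] :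
    Module.finrank K (symmetricSubmodule K ι) = Fintype.card ι * (Fintype.card ι + 1) / 2 := by
  rw [(symmetricSubmoduleEquivSym2 K ι).finrank_eq, Module.finrank_fintype_fun_eq_card,
    Sym2.card, Nat.choose_two_right, Nat.add_sub_cancel, mul_comm]

end SymmetricSubmodule

lemma vecMulVec_add_vecMulVec {ι R : Type*} [CommRing R] (u w : ι → R) :
    vecMulVec u w + vecMulVec w u =
      vecMulVec (u + w) (u + w) - vecMulVec u u - vecMulVec w w := by
  simp only [add_vecMulVec, vecMulVec_add]
  abel

section Trace

variable {ι : Type*} [Fintype ι]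

lemma trace_mul_vecMulVec {R : Type*} [CommSemiring R] (M : Matrix ι ι R) (u w : ι → R) :
    (M * vecMulVec u w).trace = (M *ᵥ u) ⬝ᵥ w := by
  rw [mul_vecMulVec, trace_vecMulVec]

lemma IsSymm.trace_mul_vecMulVec_add_vecMulVec {R : Type*} [CommSemiring R] {M : Matrix ι ι R}
    (hM : M.IsSymm) (x v : ι → R) :
    (M * (vecMulVec x v + vecMulVec v x)).trace = 2 * (v ⬝ᵥ M *ᵥ x) := by
  rw [mul_add, trace_add, trace_mul_vecMulVec, trace_mul_vecMulVec, dotProduct_comm (M *ᵥ v),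
    dotProduct_mulVec, ← mulVec_transpose, hM.eq, dotProduct_comm (M *ᵥ x)]
  ring

lemma trace_mul_smul_add_smul (M X H Y : Matrix ι ι ℝ) (s t : ℝ) :
    (M * ((1 - s) • (X + t • H) + s • Y)).trace =
      (1 - s) * ((M * X).trace + t * (M * H).trace) + s * (M * Y).trace := by
  simp only [mul_add, Matrix.mul_smul, trace_add, trace_smul, smul_eq_mul]

end Trace

section PosSemidef

variable {ι : Type*} [Fintype ι]

lemma posSemidef_vecMulVec_self (u : ι → ℝ) : (vecMulVec u u).PosSemidef := by
  simpa using posSemidef_vecMulVec_self_star u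

lemma PosSemidef.trace_mul_nonneg {S Y : Matrix ι ι ℝ} (hS : S.PosSemidef) (hY : Y.PosSemidef) :
    0 ≤ (S * Y).trace := by
  obtain ⟨m, v, rfl⟩ := posSemidef_iff_eq_sum_vecMulVec.mp hY
  simp only [Finset.mul_sum, trace_sum, trace_mul_vecMulVec]
  exact Finset.sum_nonneg fun k _ => by
    simpa [dotProduct_comm] using hS.dotProduct_mulVec_nonneg (v k)

lemma PosSemidef.mulVec_dotProduct_sq_le {X : Matrix ι ι ℝ} (hX : X.PosSemidef) (y u : ι → ℝ) :
    (X *ᵥ y ⬝ᵥ u) ^ 2 ≤ (X *ᵥ y ⬝ᵥ y) * (X *ᵥ u ⬝ᵥ u) := by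
  let := X.toSeminormedAddCommGroup hX
  let := X.toInnerProductSpace hX
  have := real_inner_mul_inner_self_le u y
  -- the inner product induced by `X` is `⟪u, y⟫ = X y ⬝ᵥ u`
  change (X *ᵥ y ⬝ᵥ star u) * (X *ᵥ y ⬝ᵥ star u) ≤ (X *ᵥ u ⬝ᵥ star u) * (X *ᵥ y ⬝ᵥ star y) at this
  simpa [sq, mul_comm] using this

lemma PosDef.exists_smul_sub_vecMulVec_posSemidef [DecidableEq ι] {X : Matrix ι ι ℝ}
    (hX : X.PosDef) (v : ι → ℝ) : ∃ K : ℝ, 0 ≤ K ∧ (K • X - vecMulVec v v).PosSemidef := by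
  obtain ⟨y, rfl⟩ : ∃ y, X *ᵥ y = v :=
    ⟨X⁻¹ *ᵥ v, by rw [mulVec_mulVec, mul_nonsing_inv _ ((isUnit_iff_isUnit_det X).mp hX.isUnit),
      one_mulVec]⟩
  refine ⟨X *ᵥ y ⬝ᵥ y, by simpa [dotProduct_comm] using hX.posSemidef.dotProduct_mulVec_nonneg y,
    .of_dotProduct_mulVec_nonneg ?_ fun u => ?_⟩
  · exact (hX.isHermitian.smul (IsSelfAdjoint.all _)).sub (posSemidef_vecMulVec_self _).isHermitian
  · simpa [sub_mulVec, smul_mulVec, vecMulVec_mulVec, op_smul_eq_smul, sq, dotProduct_comm u]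
      using hX.posSemidef.mulVec_dotProduct_sq_le y u

/-- `(x + t v)(x + t v)ᵀ` supplies `x xᵀ + t (x vᵀ + v xᵀ)` up to `-t² v vᵀ`, which `t² K X₀`
absorbs. -/
lemma posSemidef_deform_vecMulVec_self {X₀ : Matrix ι ι ℝ} {K t : ℝ} {x v : ι → ℝ} (hK0 : 0 ≤ K)
    (hK : (K • X₀ - vecMulVec v v).PosSemidef) (hX₀ : X₀.PosSemidef) (ht : (K + 1) * t ^ 2 ≤ 1) :
    ((1 - (K + 1) * t ^ 2) • (vecMulVec x x + t • (vecMulVec x v + vecMulVec v x)) +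
      ((K + 1) * t ^ 2) • X₀).PosSemidef := by
  set s := (K + 1) * t ^ 2
  have hdecomp : (1 - s) • (vecMulVec x x + t • (vecMulVec x v + vecMulVec v x)) + s • X₀ =
      (1 - s) • vecMulVec (x + t • v) (x + t • v) + t ^ 2 • (K • X₀ - vecMulVec v v) +
        t ^ 2 • X₀ + (s * t ^ 2) • vecMulVec v v := by
    simp only [add_vecMulVec, vecMulVec_add, smul_vecMulVec, vecMulVec_smul, s]
    module
  rw [hdecomp]
  exact ((((posSemidef_vecMulVec_self _).smul (sub_nonneg.mpr ht)).add
    (hK.smul (sq_nonneg t))).add (hX₀.smul (sq_nonneg t))).add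
    ((posSemidef_vecMulVec_self _).smul (by positivity))

/-- Polarization: `2 M = ∑ⱼ (Mⱼ eⱼᵀ + eⱼ Mⱼᵀ)`, and each summand is a difference of squares. -/
lemma IsSymm.mem_span_posSemidef [DecidableEq ι] {M : Matrix ι ι ℝ} (hM : M.IsSymm) :
    M ∈ Submodule.span ℝ {S | S.PosSemidef} := by
  have hsquare (u : ι → ℝ) : vecMulVec u u ∈ Submodule.span ℝ {S | S.PosSemidef} :=
    Submodule.subset_span (posSemidef_vecMulVec_self u)
  have hpolar (u w : ι → ℝ) :
      vecMulVec u w + vecMulVec w u ∈ Submodule.span ℝ {S | S.PosSemidef} := by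
    rw [vecMulVec_add_vecMulVec]
    exact Submodule.sub_mem _ (Submodule.sub_mem _ (hsquare _) (hsquare _)) (hsquare _)
  have htwo : (2 : ℝ) • M =
      ∑ j, (vecMulVec (M j) (Pi.single j 1) + vecMulVec (Pi.single j 1) (M j)) := by
    ext i k
    simp [sum_apply, vecMulVec_apply, Pi.single_apply, Finset.sum_add_distrib, hM.apply, two_mul]
  have : (2 : ℝ) • M ∈ Submodule.span ℝ {S | S.PosSemidef} :=
    htwo ▸ Submodule.sum_mem _ fun j _ => hpolar _ _
  simpa using Submodule.smul_mem _ (1 / 2 : ℝ) this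

/-- Conjugation by the orthogonal projection `P` onto `x^⊥` fixes `M` and sends every PSD
matrix to a PSD matrix killing `x`. -/
lemma IsSymm.mem_span_posSemidef_of_mulVec_eq_zero [DecidableEq ι] {M : Matrix ι ι ℝ}
    {x : ι → ℝ} (hM : M.IsSymm) (hMx : M *ᵥ x = 0) :
    M ∈ Submodule.span ℝ {S | S.PosSemidef ∧ S *ᵥ x = 0} := by
  set P : Matrix ι ι ℝ := 1 - (x ⬝ᵥ x)⁻¹ • vecMulVec x x
  have hPx : P *ᵥ x = 0 := by
    rcases eq_or_ne x 0 with rfl | hx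
    · simp
    have hxx : x ⬝ᵥ x ≠ 0 := dotProduct_self_eq_zero.not.mpr hx
    simp [P, sub_mulVec, smul_mulVec, vecMulVec_mulVec, op_smul_eq_smul, smul_smul,
      inv_mul_cancel₀ hxx]
  have hPsymm : Pᵀ = P := by simp [P, transpose_vecMulVec]
  have hxM : x ᵥ* M = 0 := by rw [← mulVec_transpose, hM.eq, hMx]
  have hPMP : P * M * P = M := by
    simp [P, sub_mul, mul_sub, vecMulVec_mul, mul_vecMulVec, hxM, hMx]
  let Φ : Matrix ι ι ℝ →ₗ[ℝ] Matrix ι ι ℝ := LinearMap.mulLeft ℝ P ∘ₗ LinearMap.mulRight ℝ P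
  have hΦ : Submodule.span ℝ {S | S.PosSemidef} ≤
      (Submodule.span ℝ {S | S.PosSemidef ∧ S *ᵥ x = 0}).comap Φ :=
    Submodule.span_le.mpr fun S hS => Submodule.subset_span
      ⟨by simpa [Φ, hPsymm, mul_assoc] using hS.conjTranspose_mul_mul_same P,
        by simp [Φ, ← mulVec_mulVec, hPx]⟩
  simpa [Φ, ← mul_assoc, hPMP] using hΦ hM.mem_span_posSemidef

lemma vecMulVec_add_vecMulVec_ne_zero {x v : ι → ℝ} (hx : x ≠ 0) (hv : v ≠ 0) :
    vecMulVec x v + vecMulVec v x ≠ 0 := by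
  have hpos (w : ι → ℝ) (hw : w ≠ 0) : 0 < w ⬝ᵥ w :=
    lt_of_le_of_ne' (by simpa using dotProduct_star_self_nonneg w)
      (dotProduct_self_eq_zero.not.mpr hw)
  intro hH
  have : v ⬝ᵥ (vecMulVec x v + vecMulVec v x) *ᵥ x = (v ⬝ᵥ x) ^ 2 + (x ⬝ᵥ x) * (v ⬝ᵥ v) := by
    simp [add_mulVec, vecMulVec_mulVec, op_smul_eq_smul]
    ring
  rw [hH, zero_mulVec, dotProduct_zero] at this
  nlinarith [sq_nonneg (v ⬝ᵥ x), mul_pos (hpos x hx) (hpos v hv)]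

end PosSemidef

end Matrix

lemma eq_zero_of_eventually_mul_le_sq_mul {h : ℝ} {g : ℝ → ℝ} (hg : ContinuousAt g 0)
    (hle : ∀ᶠ t in 𝓝 0, t * h ≤ t ^ 2 * g t) : h = 0 := by
  have hlim : Tendsto (fun t => t * g t) (𝓝 0) (𝓝 0) := by
    have : ContinuousAt (fun t => t * g t) 0 := continuousAt_id.mul hg
    simpa using this.tendsto
  have hle' : ∀ᶠ t in 𝓝 0, t * h ≤ t * (t * g t) := hle.mono fun t ht => by linarith
  refine le_antisymm ?_ ?_
  · refine ge_of_tendsto (hlim.mono_left (nhdsWithin_le_nhds (s := Set.Ioi 0))) ?_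
    filter_upwards [nhdsWithin_le_nhds hle', self_mem_nhdsWithin] with t ht (htpos : 0 < t)
    exact le_of_mul_le_mul_left ht htpos
  · refine le_of_tendsto (hlim.mono_left (nhdsWithin_le_nhds (s := Set.Iio 0))) ?_
    filter_upwards [nhdsWithin_le_nhds hle', self_mem_nhdsWithin] with t ht (htneg : t < 0)
    exact (mul_le_mul_left_of_neg htneg).mp ht

lemma exists_ne_zero_forall_dotProduct_eq_zero {ι : Type*} [Fintype ι] [DecidableEq ι]
    {s : Set (ι → ℝ)} (hs : Submodule.span ℝ s ≠ ⊤) : ∃ v ≠ 0, ∀ u ∈ s, v ⬝ᵥ u = 0 := by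
  obtain ⟨f, hf, hker⟩ := (Submodule.span ℝ s).exists_le_ker_of_lt_top hs.lt_top
  obtain ⟨v, rfl⟩ := (dotProductEquiv ℝ ι).surjective f
  refine ⟨v, by rintro rfl; simp at hf, fun u hu => ?_⟩
  simpa using hker (Submodule.subset_span hu)

lemma isVertex_iff_span_normalConeM_eq {ι : Type*} [Fintype ι] [DecidableEq ι]
    {C : Set (Matrix ι ι ℝ)} {X : Matrix ι ι ℝ} :
    IsVertex C X ↔ X ∈ C ∧ Submodule.span ℝ (normalConeM C X) = symmetricSubmodule ℝ ι := by
  have hle : Submodule.span ℝ (normalConeM C X) ≤ symmetricSubmodule ℝ ι :=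
    Submodule.span_le.mpr fun c hc => hc.1
  refine and_congr_right fun _ => ⟨fun h => Submodule.eq_of_le_of_finrank_eq hle ?_, fun h => ?_⟩
    <;> rw [h, finrank_symmetricSubmodule]

section Spectrahedron

variable {ι I J : Type*} [Fintype ι]

section

variable (A : I → Matrix ι ι ℝ) (B : J → Matrix ι ι ℝ) (a : I → ℝ) (b : J → ℝ) (x : ι → ℝ)

def spectrahedron : Set (Matrix ι ι ℝ) :=
  {X | X.PosSemidef ∧ (∀ i, (A i * X).trace = a i) ∧ ∀ j, (B j * X).trace ≤ b j}

def activeConstraintVectors : Set (ι → ℝ) :=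
  Set.range (fun i => A i *ᵥ x) ∪ {v | ∃ j, (B j * vecMulVec x x).trace = b j ∧ v = B j *ᵥ x}

end

variable {A : I → Matrix ι ι ℝ} {B : J → Matrix ι ι ℝ} {a : I → ℝ} {b : J → ℝ}
  {X : Matrix ι ι ℝ} {x : ι → ℝ}

lemma mem_normalConeM_spectrahedron_of_eq {i : I} (hA : (A i).IsSymm)
    (hX : X ∈ spectrahedron A B a b) : A i ∈ normalConeM (spectrahedron A B a b) X :=
  ⟨hA, fun _ hY => ((hY.2.1 i).trans (hX.2.1 i).symm).le⟩

lemma mem_normalConeM_spectrahedron_of_tight {j : J} (hB : (B j).IsSymm)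
    (hj : (B j * X).trace = b j) : B j ∈ normalConeM (spectrahedron A B a b) X :=
  ⟨hB, fun _ hY => hj ▸ hY.2.2 j⟩

lemma neg_mem_normalConeM_spectrahedron {S : Matrix ι ι ℝ} (hS : S.PosSemidef)
    (hSX : (S * X).trace = 0) : -S ∈ normalConeM (spectrahedron A B a b) X := by
  refine ⟨by simpa using hS.isHermitian, fun Y hY => ?_⟩
  simpa [hSX] using hS.trace_mul_nonneg hY.1

lemma span_normalConeM_spectrahedron_eq_of_span_eq_top [DecidableEq ι]
    (hA : ∀ i, (A i).IsSymm) (hB : ∀ j, (B j).IsSymm)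
    (hmem : vecMulVec x x ∈ spectrahedron A B a b)
    (hspan : Submodule.span ℝ (activeConstraintVectors A B b x) = ⊤) :
    Submodule.span ℝ (normalConeM (spectrahedron A B a b) (vecMulVec x x)) =
      symmetricSubmodule ℝ ι := by
  set N := Submodule.span ℝ (normalConeM (spectrahedron A B a b) (vecMulVec x x))
  have hNsymm : N ≤ symmetricSubmodule ℝ ι := Submodule.span_le.mpr fun c hc => hc.1
  refine le_antisymm hNsymm fun c hc => ?_
  let φ : Matrix ι ι ℝ →ₗ[ℝ] ι → ℝ := LinearMap.applyₗ x ∘ₗ toLin'.toLinearMap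
  have hφ : Submodule.span ℝ (activeConstraintVectors A B b x) ≤ N.map φ := by
    refine Submodule.span_le.mpr ?_
    rintro _ (⟨i, rfl⟩ | ⟨j, hj, rfl⟩)
    · exact ⟨A i, Submodule.subset_span (mem_normalConeM_spectrahedron_of_eq (hA i) hmem),
        by simp [φ]⟩
    · exact ⟨B j, Submodule.subset_span (mem_normalConeM_spectrahedron_of_tight (hB j) hj),
        by simp [φ]⟩
  obtain ⟨g, hgN, hgc⟩ := hφ (hspan ▸ Submodule.mem_top : c *ᵥ x ∈ _)
  have hker : Submodule.span ℝ {S | S.PosSemidef ∧ S *ᵥ x = 0} ≤ N :=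
    Submodule.span_le.mpr fun S ⟨hS, hSx⟩ => by
      simpa using N.neg_mem <| Submodule.subset_span <|
        neg_mem_normalConeM_spectrahedron hS (by rw [trace_mul_vecMulVec, hSx, zero_dotProduct])
  have hcg : c - g ∈ N :=
    hker <| (IsSymm.sub hc (hNsymm hgN)).mem_span_posSemidef_of_mulVec_eq_zero
      (by simpa [φ, sub_mulVec, sub_eq_zero] using hgc.symm)
  simpa using N.add_mem hcg hgN

variable [Finite J]

lemma eventually_mem_spectrahedron {v : ι → ℝ} {X₀ : Matrix ι ι ℝ} {K : ℝ}
    (hmem : vecMulVec x x ∈ spectrahedron A B a b) (hX₀ : X₀ ∈ spectrahedron A B a b)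
    (hK0 : 0 ≤ K) (hK : (K • X₀ - vecMulVec v v).PosSemidef)
    (hAH : ∀ i, (A i * (vecMulVec x v + vecMulVec v x)).trace = 0)
    (hBH : ∀ j, (B j * vecMulVec x x).trace = b j →
      (B j * (vecMulVec x v + vecMulVec v x)).trace = 0) :
    ∀ᶠ t in 𝓝 0, (1 - (K + 1) * t ^ 2) • (vecMulVec x x + t • (vecMulVec x v + vecMulVec v x)) +
      ((K + 1) * t ^ 2) • X₀ ∈ spectrahedron A B a b := by
  set H := vecMulVec x v + vecMulVec v x
  have hs : ∀ᶠ t in 𝓝 (0 : ℝ), (K + 1) * t ^ 2 ≤ 1 :=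
    ((show ContinuousAt (fun t : ℝ => (K + 1) * t ^ 2) 0 by fun_prop).eventually_lt
      continuousAt_const (by simp)).mono fun _ => le_of_lt
  have hB : ∀ j, ∀ᶠ t in 𝓝 (0 : ℝ), (1 - (K + 1) * t ^ 2) * ((B j * vecMulVec x x).trace +
      t * (B j * H).trace) + (K + 1) * t ^ 2 * (B j * X₀).trace ≤ b j := by
    intro j
    by_cases hj : (B j * vecMulVec x x).trace = b j
    · refine Eventually.of_forall fun t => ?_
      have : 0 ≤ (K + 1) * t ^ 2 := by positivity
      rw [hj, hBH j hj]
      nlinarith [hX₀.2.2 j]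
    · refine (ContinuousAt.eventually_lt (by fun_prop) continuousAt_const ?_).mono
        fun _ => le_of_lt
      simpa using lt_of_le_of_ne (hmem.2.2 j) hj
  filter_upwards [hs, eventually_all.mpr hB] with t ht htB
  refine ⟨posSemidef_deform_vecMulVec_self hK0 hK hX₀.1 ht, fun i => ?_, fun j => ?_⟩
  · rw [trace_mul_smul_add_smul, hAH, hmem.2.1, hX₀.2.1]
    ring
  · rw [trace_mul_smul_add_smul]
    exact htB j

variable [DecidableEq ι]

lemma trace_mul_vecMulVec_add_eq_zero_of_mem_normalConeM {v : ι → ℝ} {c X₀ : Matrix ι ι ℝ}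
    (hA : ∀ i, (A i).IsSymm) (hB : ∀ j, (B j).IsSymm)
    (hX₀ : X₀ ∈ spectrahedron A B a b) (hX₀pos : X₀.PosDef)
    (hmem : vecMulVec x x ∈ spectrahedron A B a b)
    (hv : ∀ u ∈ activeConstraintVectors A B b x, v ⬝ᵥ u = 0)
    (hc : c ∈ normalConeM (spectrahedron A B a b) (vecMulVec x x)) :
    (c * (vecMulVec x v + vecMulVec v x)).trace = 0 := by
  obtain ⟨K, hK0, hK⟩ := hX₀pos.exists_smul_sub_vecMulVec_posSemidef v
  have hZ := eventually_mem_spectrahedron hmem hX₀ hK0 hK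
    (fun i => by rw [(hA i).trace_mul_vecMulVec_add_vecMulVec, hv _ (.inl ⟨i, rfl⟩), mul_zero])
    (fun j hj => by
      rw [(hB j).trace_mul_vecMulVec_add_vecMulVec, hv _ (.inr ⟨j, hj, rfl⟩), mul_zero])
  refine eq_zero_of_eventually_mul_le_sq_mul (g := fun t => (K + 1) *
    ((c * vecMulVec x x).trace + t * (c * (vecMulVec x v + vecMulVec v x)).trace -
      (c * X₀).trace)) (by fun_prop) ?_
  filter_upwards [hZ] with t ht
  have := hc.2 _ ht
  rw [trace_mul_smul_add_smul] at this
  linear_combination this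

lemma span_eq_top_of_span_normalConeM_spectrahedron_eq
    (hA : ∀ i, (A i).IsSymm) (hB : ∀ j, (B j).IsSymm)
    (hSlater : ∃ X ∈ spectrahedron A B a b, X.PosDef) (hx : x ≠ 0)
    (hmem : vecMulVec x x ∈ spectrahedron A B a b)
    (hN : Submodule.span ℝ (normalConeM (spectrahedron A B a b) (vecMulVec x x)) =
      symmetricSubmodule ℝ ι) :
    Submodule.span ℝ (activeConstraintVectors A B b x) = ⊤ := by
  by_contra hspan
  obtain ⟨v, hv0, hv⟩ := exists_ne_zero_forall_dotProduct_eq_zero hspan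
  obtain ⟨X₀, hX₀, hX₀pos⟩ := hSlater
  set H := vecMulVec x v + vecMulVec v x
  let ℓ : Matrix ι ι ℝ →ₗ[ℝ] ℝ := traceLinearMap ι ℝ ℝ ∘ₗ LinearMap.mulRight ℝ H
  have hNℓ : Submodule.span ℝ (normalConeM (spectrahedron A B a b) (vecMulVec x x)) ≤
      LinearMap.ker ℓ := Submodule.span_le.mpr fun c hc =>
    trace_mul_vecMulVec_add_eq_zero_of_mem_normalConeM hA hB hX₀ hX₀pos hmem hv hc
  have hHsymm : H.IsSymm := by simp [H, IsSymm, transpose_vecMulVec, add_comm]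
  have hHH : (Hᴴ * H).trace = 0 := by
    simpa [ℓ, hHsymm.eq] using hNℓ (hN ▸ hHsymm : H ∈ _)
  exact vecMulVec_add_vecMulVec_ne_zero hx hv0 (trace_conjTranspose_mul_self_eq_zero_iff.mp hHH)

end Spectrahedron

theorem rank_one_vertex_characterization {n p q : ℕ}
    (A : Fin p → Matrix (Fin n) (Fin n) ℝ) (B : Fin q → Matrix (Fin n) (Fin n) ℝ)
    (hA : ∀ i, (A i).IsSymm) (hB : ∀ j, (B j).IsSymm)
    (a : Fin p → ℝ) (b : Fin q → ℝ)
    (C : Set (Matrix (Fin n) (Fin n) ℝ))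
    (hC : C = {X | X.PosSemidef ∧ (∀ i, (A i * X).trace = a i) ∧
      (∀ j, (B j * X).trace ≤ b j)})
    (hSlater : ∃ X ∈ C, X.PosDef)
    (x : Fin n → ℝ) (hx : x ≠ 0) (hmem : Matrix.vecMulVec x x ∈ C) :
    IsVertex C (Matrix.vecMulVec x x) ↔
      Submodule.span ℝ ((Set.range fun i => (A i).mulVec x) ∪
        {v | ∃ j : Fin q, (B j * Matrix.vecMulVec x x).trace = b j ∧ v = (B j).mulVec x}) = ⊤ := by
  change C = spectrahedron A B a b at hC
  subst hC
  rw [isVertex_iff_span_normalConeM_eq, and_iff_right hmem]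
  exact ⟨span_eq_top_of_span_normalConeM_spectrahedron_eq hA hB hSlater hx hmem,
    span_normalConeM_spectrahedron_eq_of_span_eq_top hA hB hmem⟩
end

section
/- Let K ⊆ E be a pointed closed convex cone with nonempty interior in a finite-dimensional real inner product space E, let A : E → ℝᵖ and B : E → ℝ^q be linear, a ∈ ℝᵖ, b ∈ ℝ^q, and C := {x ∈ K : A(x) = a, B(x) ≤ b}. Suppose some point of C lies in the interior of K. Then for every x̄ ∈ C, the normal cone of C at x̄ equals Im(A*) + {B*(z) : z ∈ ℝ^q₊, z_j = 0 whenever (B(x̄))_j < b_j} − (K* ∩ {x̄}^⊥). -/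
/-!
Write `P` for the polyhedron cut out by `A` and `B`, so that `C = K ∩ P`. Under the Slater
condition the normal cone of `K ∩ P` is the sum of those of `K` and `P`: a normal `c` at `x̄` is
split by separating `interior K × (⟪c, x̄⟫, ∞)` from the hypograph of `⟪c, ·⟫` over `P`. As `K` is
a cone, its normal cone at `x̄` is `-(K* ∩ {x̄}ᗮ)`. The normal cone of `P` is given by Farkas'
lemma applied to the vectors `±A*(eᵢ)` and `B*(eⱼ)`, `j` active: if a direction `d` has
nonnegative inner product with all of them, then `x̄ - ε d ∈ P` for small `ε > 0`. Farkas' lemma is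
separation from the cone spanned by finitely many vectors, which is closed by the conic
Carathéodory theorem: it is a finite union of images of orthants under injective linear maps.
-/

open RealInnerProductSpace

/-- The normal cone of a convex set `C` at a point `x`. -/
def normalCone {E : Type*} [NormedAddCommGroup E] [InnerProductSpace ℝ E]
    (C : Set E) (x : E) : Set E :=
  {c | ∀ y ∈ C, ⟪c, y⟫ ≤ ⟪c, x⟫}

open scoped Pointwise

namespace PointedCone

section Caratheodory

variable {E : Type*} [AddCommGroup E] [Module ℝ E] {x : E}

lemma mem_hull_finset_iff {t : Finset E} :
    x ∈ hull ℝ (t : Set E) ↔ ∃ f : E → ℝ, (∀ e ∈ t, 0 ≤ f e) ∧ ∑ e ∈ t, f e • e = x := by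
  constructor
  · rw [Submodule.mem_span_finset]
    rintro ⟨f, -, rfl⟩
    exact ⟨fun e ↦ f e, fun e _ ↦ (f e).2, rfl⟩
  · rintro ⟨f, hf, rfl⟩
    exact Submodule.sum_mem _ fun e he ↦
      Nonneg.mk_smul (f e) (hf e he) e ▸ Submodule.smul_mem _ _ (subset_hull he)

theorem mem_hull_erase [DecidableEq E] {t : Finset E}
    (h : ¬LinearIndepOn ℝ id (t : Set E)) (hx : x ∈ hull ℝ (t : Set E)) :
    ∃ y ∈ t, x ∈ hull ℝ (t.erase y : Set E) := by
  obtain ⟨f, hf, rfl⟩ := mem_hull_finset_iff.1 hx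
  obtain ⟨g, hg, i, hit, hi⟩ := not_linearIndepOn_finset_iff.1 h
  obtain ⟨g, hg, hpos⟩ : ∃ g : E → ℝ, ∑ e ∈ t, g e • e = 0 ∧ ∃ e ∈ t, 0 < g e := by
    rcases hi.lt_or_gt with hi | hi
    · exact ⟨-g, by simpa using hg, i, hit, by simpa using hi⟩
    · exact ⟨g, hg, i, hit, hi⟩
  -- Move along the relation `g` until the first coefficient of `f` vanishes.
  obtain ⟨i₀, hi₀s, hmin⟩ : ∃ i₀ ∈ {e ∈ t | 0 < g e}, ∀ e ∈ {e ∈ t | 0 < g e},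
      f i₀ / g i₀ ≤ f e / g e := by
    obtain ⟨e, he, hge⟩ := hpos
    exact Finset.exists_min_image _ _ ⟨e, Finset.mem_filter.2 ⟨he, hge⟩⟩
  obtain ⟨hi₀, hg₀⟩ := Finset.mem_filter.1 hi₀s
  let k : E → ℝ := fun e ↦ f e - f i₀ / g i₀ * g e
  have hk : k i₀ = 0 := by simp [k, hg₀.ne']
  refine ⟨i₀, hi₀, mem_hull_finset_iff.2 ⟨k, fun e he ↦ ?_, ?_⟩⟩
  · have het := Finset.mem_of_mem_erase he
    by_cases hge : 0 < g e
    · have := (le_div_iff₀ hge).1 (hmin e (Finset.mem_filter.2 ⟨het, hge⟩))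
      simp only [k]
      linarith
    · have : f i₀ / g i₀ * g e ≤ 0 :=
        mul_nonpos_of_nonneg_of_nonpos (div_nonneg (hf i₀ hi₀) hg₀.le) (not_lt.1 hge)
      simp only [k]
      linarith [hf e het]
  · rw [Finset.sum_erase _ (by rw [hk, zero_smul])]
    simp only [k, sub_smul, mul_smul, Finset.sum_sub_distrib, ← Finset.smul_sum, hg, smul_zero,
      sub_zero]

theorem exists_linearIndepOn_of_mem_hull [DecidableEq E] (t : Finset E)
    (hx : x ∈ hull ℝ (t : Set E)) :
    ∃ u ⊆ t, LinearIndepOn ℝ id (u : Set E) ∧ x ∈ hull ℝ (u : Set E) := by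
  induction t using Finset.strongInduction with
  | _ t ih =>
  by_cases h : LinearIndepOn ℝ id (t : Set E)
  · exact ⟨t, subset_rfl, h, hx⟩
  · obtain ⟨y, hy, hxy⟩ := mem_hull_erase h hx
    obtain ⟨u, hu, hli, hxu⟩ := ih _ (Finset.erase_ssubset hy) hxy
    exact ⟨u, hu.trans (Finset.erase_subset _ _), hli, hxu⟩

end Caratheodory

section Closed

variable {E : Type*} [AddCommGroup E] [Module ℝ E] [TopologicalSpace E] [IsTopologicalAddGroup E]
  [ContinuousSMul ℝ E] [T2Space E]

theorem isClosed_hull_of_linearIndepOn {u : Finset E} (hu : LinearIndepOn ℝ id (u : Set E)) :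
    IsClosed (hull ℝ (u : Set E) : Set E) := by
  let L := Fintype.linearCombination ℝ ((↑) : u → E)
  have hL : (hull ℝ (u : Set E) : Set E) = L '' Set.Ici 0 := by
    ext x
    constructor
    · rw [SetLike.mem_coe, mem_hull_finset_iff]
      rintro ⟨f, hf, rfl⟩
      exact ⟨fun e ↦ f e, fun e ↦ hf e e.2, by
        simp [L, Fintype.linearCombination_apply, Finset.sum_attach u (fun e ↦ f e • e)]⟩
    · rintro ⟨c, hc, rfl⟩
      exact Submodule.sum_mem _ fun e _ ↦
        Nonneg.mk_smul (c e) (hc e) (e : E) ▸ Submodule.smul_mem _ _ (subset_hull e.2)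
  rw [hL]
  exact (LinearMap.isClosedEmbedding_of_injective
    (LinearMap.ker_eq_bot.2 hu.fintypeLinearCombination_injective)).isClosedMap _ isClosed_Ici

theorem isClosed_hull_finset (t : Finset E) : IsClosed (hull ℝ (t : Set E) : Set E) := by
  classical
  have : (hull ℝ (t : Set E) : Set E) =
      ⋃ u ∈ t.powerset.filter (fun u : Finset E ↦ LinearIndepOn ℝ id (u : Set E)),
        (hull ℝ (u : Set E) : Set E) := by
    ext x
    simp only [SetLike.mem_coe, Set.mem_iUnion, Finset.mem_filter, Finset.mem_powerset,
      exists_prop]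
    constructor
    · intro hx
      obtain ⟨u, hut, hu, hxu⟩ := exists_linearIndepOn_of_mem_hull t hx
      exact ⟨u, ⟨hut, hu⟩, hxu⟩
    · rintro ⟨u, ⟨hut, -⟩, hxu⟩
      exact Submodule.span_mono (Finset.coe_subset.2 hut) hxu
  rw [this]
  exact isClosed_biUnion_finset fun u hu ↦ isClosed_hull_of_linearIndepOn (Finset.mem_filter.1 hu).2

end Closed

theorem exists_nonneg_sum_eq_of_forall_inner_nonneg {E : Type*} [NormedAddCommGroup E]
    [InnerProductSpace ℝ E] [CompleteSpace E] {ι : Type*} [Fintype ι] (v : ι → E) {c : E}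
    (h : ∀ y, (∀ i, 0 ≤ ⟪v i, y⟫) → 0 ≤ ⟪c, y⟫) :
    ∃ μ : ι → ℝ, (∀ i, 0 ≤ μ i) ∧ ∑ i, μ i • v i = c := by
  classical
  let C : ProperCone ℝ E := ⟨hull ℝ (Finset.univ.image v : Set E), isClosed_hull_finset _⟩
  have hc : c ∈ C := by
    by_contra hc
    obtain ⟨y, hy, hcy⟩ := C.hyperplane_separation' hc
    exact hcy.not_ge (h y fun i ↦ hy _ (subset_hull (by simp)))
  obtain ⟨μ, rfl⟩ := (Submodule.mem_span_range_iff_exists_fun _).1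
    (show c ∈ hull ℝ (Set.range v) by simpa [C] using hc)
  exact ⟨fun i ↦ μ i, fun i ↦ (μ i).2, rfl⟩

end PointedCone

theorem exists_pos_forall_add_mul_le {ι : Type*} [Finite ι] {u w b : ι → ℝ}
    (hu : ∀ j, u j ≤ b j) (hw : ∀ j, u j = b j → w j ≤ 0) :
    ∃ ε > 0, ∀ j, u j + ε * w j ≤ b j := by
  have : ∀ᶠ ε in nhdsWithin (0 : ℝ) (Set.Ioi 0), ∀ j, u j + ε * w j ≤ b j := by
    refine Filter.eventually_all.2 fun j ↦ ?_
    rcases (hu j).eq_or_lt with hj | hj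
    · filter_upwards [self_mem_nhdsWithin] with ε hε
      nlinarith [hw j hj, Set.mem_Ioi.1 hε]
    · have hcont : Continuous fun ε : ℝ ↦ u j + ε * w j := by fun_prop
      filter_upwards [nhdsWithin_le_nhds
        (hcont.continuousAt.eventually_lt continuousAt_const (by simpa using hj))] with ε hε
      exact hε.le
  obtain ⟨ε, hε, hε0⟩ := (this.and self_mem_nhdsWithin).exists
  exact ⟨ε, hε0, hε⟩

section Polyhedron

variable {E : Type*} {m n : Type*}

def polyhedron [AddCommGroup E] [Module ℝ E] (A : E →ₗ[ℝ] EuclideanSpace ℝ m)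
    (B : E →ₗ[ℝ] EuclideanSpace ℝ n) (a : EuclideanSpace ℝ m) (b : EuclideanSpace ℝ n) : Set E :=
  {x | A x = a ∧ ∀ j, B x j ≤ b j}

theorem convex_polyhedron [AddCommGroup E] [Module ℝ E] (A : E →ₗ[ℝ] EuclideanSpace ℝ m)
    (B : E →ₗ[ℝ] EuclideanSpace ℝ n) (a : EuclideanSpace ℝ m) (b : EuclideanSpace ℝ n) :
    Convex ℝ (polyhedron A B a b) := by
  rintro x ⟨hAx, hBx⟩ y ⟨hAy, hBy⟩ θ θ' hθ hθ' hθθ'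
  refine ⟨by rw [map_add, map_smul, map_smul, hAx, hAy, ← add_smul, hθθ', one_smul], fun j ↦ ?_⟩
  have : b j = θ * b j + θ' * b j := by rw [← add_mul, hθθ', one_mul]
  simp only [map_add, map_smul, PiLp.add_apply, PiLp.smul_apply, smul_eq_mul]
  nlinarith [hBx j, hBy j]

variable [NormedAddCommGroup E] [InnerProductSpace ℝ E] [FiniteDimensional ℝ E]
  [Fintype m] [Fintype n]

lemma sum_smul_adjoint_single [DecidableEq m] (A : E →ₗ[ℝ] EuclideanSpace ℝ m) (μ : m → ℝ) :
    ∑ i, μ i • LinearMap.adjoint A (EuclideanSpace.single i 1) =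
      LinearMap.adjoint A (WithLp.toLp 2 μ) := by
  have : ∑ i, μ i • EuclideanSpace.single i (1 : ℝ) = WithLp.toLp 2 μ := by
    ext j; simp [Pi.single_apply]
  simp only [← this, map_sum, map_smul]

theorem normalCone_polyhedron (A : E →ₗ[ℝ] EuclideanSpace ℝ m) (B : E →ₗ[ℝ] EuclideanSpace ℝ n)
    (a : EuclideanSpace ℝ m) (b : EuclideanSpace ℝ n) {x : E} (hx : x ∈ polyhedron A B a b) :
    normalCone (polyhedron A B a b) x =
      {c | ∃ y z, (∀ j, 0 ≤ z j) ∧ (∀ j, B x j < b j → z j = 0) ∧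
        c = LinearMap.adjoint A y + LinearMap.adjoint B z} := by
  classical
  ext c
  constructor
  · intro hc
    let v : (m ⊕ m) ⊕ n → E :=
      Sum.elim (Sum.elim (fun i ↦ LinearMap.adjoint A (EuclideanSpace.single i 1))
          (fun i ↦ -LinearMap.adjoint A (EuclideanSpace.single i 1)))
        (fun j ↦ if B x j = b j then LinearMap.adjoint B (EuclideanSpace.single j 1) else 0)
    obtain ⟨μ, hμ, rfl⟩ : ∃ μ : (m ⊕ m) ⊕ n → ℝ, (∀ k, 0 ≤ μ k) ∧ ∑ k, μ k • v k = c := by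
      refine PointedCone.exists_nonneg_sum_eq_of_forall_inner_nonneg v fun d hd ↦ ?_
      have hAd : A d = 0 := by
        ext i
        have h₁ := hd (.inl (.inl i))
        have h₂ := hd (.inl (.inr i))
        simp only [v, Sum.elim_inl, Sum.elim_inr, inner_neg_left, LinearMap.adjoint_inner_left,
          EuclideanSpace.inner_single_left, map_one, one_mul, neg_nonneg] at h₁ h₂
        exact le_antisymm h₂ h₁
      have hBd : ∀ j, B x j = b j → 0 ≤ B d j := fun j hj ↦ by
        simpa [v, hj, LinearMap.adjoint_inner_left, EuclideanSpace.inner_single_left] using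
          hd (.inr j)
      obtain ⟨ε, hε, hεb⟩ := exists_pos_forall_add_mul_le (u := fun j ↦ B x j)
        (w := fun j ↦ -B d j) hx.2 fun j hj ↦ neg_nonpos.2 (hBd j hj)
      have hmem : x - ε • d ∈ polyhedron A B a b :=
        ⟨by simp [hAd, hx.1], fun j ↦ by simpa [sub_eq_add_neg] using hεb j⟩
      have := hc _ hmem
      rw [inner_sub_right, real_inner_smul_right] at this
      nlinarith
    refine ⟨WithLp.toLp 2 fun i ↦ μ (.inl (.inl i)) - μ (.inl (.inr i)),
      WithLp.toLp 2 fun j ↦ if B x j = b j then μ (.inr j) else 0,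
      fun j ↦ ?_, fun j hj ↦ if_neg hj.ne, ?_⟩
    · dsimp only
      split_ifs
      exacts [hμ _, le_rfl]
    · rw [← sum_smul_adjoint_single, ← sum_smul_adjoint_single]
      simp [v, Fintype.sum_sum_type, sub_smul, Finset.sum_sub_distrib, ite_smul]
      abel
  · rintro ⟨y, z, hz, hzx, rfl⟩ x' ⟨hAx', hBx'⟩
    simp only [inner_add_left, LinearMap.adjoint_inner_left, hAx', hx.1, add_le_add_iff_left]
    simp only [PiLp.inner_apply, RCLike.inner_apply, conj_trivial]
    refine Finset.sum_le_sum fun j _ ↦ ?_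
    by_cases hj : B x j < b j
    · simp [hzx j hj]
    · exact mul_le_mul_of_nonneg_right (not_lt.1 hj |>.trans' (hBx' j)) (hz j)

end Polyhedron

section NormalCone

variable {E : Type*} [NormedAddCommGroup E] [InnerProductSpace ℝ E]

theorem mem_normalCone_of_smul_mem_iff {K : Set E} (hK : ∀ x ∈ K, ∀ t : ℝ, 0 ≤ t → t • x ∈ K)
    {x c : E} (hx : x ∈ K) :
    c ∈ normalCone K x ↔ (∀ y ∈ K, ⟪c, y⟫ ≤ 0) ∧ ⟪c, x⟫ = 0 := by
  constructor
  · intro hc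
    have h₀ := hc _ (hK x hx 0 le_rfl)
    have h₂ := hc _ (hK x hx 2 zero_le_two)
    simp only [zero_smul, inner_zero_right, real_inner_smul_right] at h₀ h₂
    have hcx : ⟪c, x⟫ = 0 := by linarith
    exact ⟨fun y hy ↦ hcx ▸ hc y hy, hcx⟩
  · rintro ⟨hK, hcx⟩ y hy
    exact hcx ▸ hK y hy

theorem add_mem_normalCone_inter {K P : Set E} {x c₁ c₂ : E} (h₁ : c₁ ∈ normalCone K x)
    (h₂ : c₂ ∈ normalCone P x) : c₁ + c₂ ∈ normalCone (K ∩ P) x := fun y hy ↦ by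
  simpa only [inner_add_left] using add_le_add (h₁ y hy.1) (h₂ y hy.2)

lemma ContinuousLinearMap.exists_inner_add_mul [CompleteSpace E] (f : E × ℝ →L[ℝ] ℝ) :
    ∃ (d : E) (μ : ℝ), ∀ y t, f (y, t) = ⟪d, y⟫ + t * μ := by
  refine ⟨(InnerProductSpace.toDual ℝ E).symm (f.comp (.inl ℝ E ℝ)), f (0, 1), fun y t ↦ ?_⟩
  rw [InnerProductSpace.toDual_symm_apply, ← smul_eq_mul, ← map_smul,
    ContinuousLinearMap.comp_apply, ContinuousLinearMap.inl_apply, ← map_add]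
  simp

theorem exists_sub_mem_normalCone_of_mem_normalCone_inter [CompleteSpace E] {K P : Set E}
    (hK : Convex ℝ K) (hP : Convex ℝ P) (hslater : (P ∩ interior K).Nonempty) {x c : E}
    (hxK : x ∈ K) (hxP : x ∈ P) (hc : c ∈ normalCone (K ∩ P) x) :
    ∃ d ∈ normalCone K x, c - d ∈ normalCone P x := by
  obtain ⟨x₀, hx₀P, hx₀K⟩ := hslater
  let S : Set (E × ℝ) := interior K ×ˢ Set.Ioi ⟪c, x⟫
  let T : Set (E × ℝ) := {w | w.1 ∈ P ∧ w.2 ≤ ⟪c, w.1⟫}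
  have hS : Convex ℝ S := hK.interior.prod (convex_Ioi _)
  have hT : Convex ℝ T := ((innerₗ E c).concaveOn hP).convex_hypograph
  have hST : Disjoint S T := Set.disjoint_left.2 fun ⟨y, t⟩ ⟨hyK, ht⟩ ⟨hyP, hty⟩ ↦
    (hty.trans (hc y ⟨interior_subset hyK, hyP⟩)).not_gt ht
  obtain ⟨f, u, hfS, hfT⟩ := geometric_hahn_banach_open hS (isOpen_interior.prod isOpen_Ioi) hT hST
  obtain ⟨d, μ, hf⟩ := f.exists_inner_add_mul
  have hdK : ∀ y ∈ K, ⟪d, y⟫ + ⟪c, x⟫ * μ ≤ u := by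
    have hclS : closure S ⊆ {w | f w ≤ u} :=
      closure_minimal (fun w hw ↦ (hfS w hw).le) (isClosed_le f.continuous continuous_const)
    intro y hy
    have hy' : (y, ⟪c, x⟫) ∈ closure S := by
      rw [closure_prod_eq, closure_Ioi, hK.closure_interior_eq_closure_of_nonempty_interior
        ⟨x₀, hx₀K⟩]
      exact ⟨subset_closure hy, Set.mem_Ici.2 le_rfl⟩
    simpa [hf] using hclS hy'
  have hdP : ∀ y ∈ P, u ≤ ⟪d, y⟫ + ⟪c, y⟫ * μ := fun y hy ↦ by
    simpa [hf] using hfT (y, ⟪c, y⟫) ⟨hy, le_rfl⟩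
  -- The Slater point makes the separating hyperplane non-vertical.
  have hμ : 0 < -μ := by
    have h₁ := hf x₀ (⟪c, x⟫ + 1) ▸ hfS (x₀, ⟪c, x⟫ + 1) ⟨hx₀K, Set.mem_Ioi.2 (lt_add_one _)⟩
    have h₂ := hc x₀ ⟨interior_subset hx₀K, hx₀P⟩
    nlinarith [hdP x₀ hx₀P]
  have hu : u = ⟪d, x⟫ + ⟪c, x⟫ * μ := le_antisymm (hdP x hxP) (hdK x hxK)
  refine ⟨(-μ)⁻¹ • d, fun y hy ↦ ?_, fun y hy ↦ ?_⟩
  · simp only [real_inner_smul_left]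
    exact mul_le_mul_of_nonneg_left (by linarith [hdK y hy]) (inv_nonneg.2 hμ.le)
  · have : ⟪c - (-μ)⁻¹ • d, x⟫ - ⟪c - (-μ)⁻¹ • d, y⟫ =
        (-μ)⁻¹ * (⟪d, y⟫ + ⟪c, y⟫ * μ - (⟪d, x⟫ + ⟪c, x⟫ * μ)) := by
      have : μ ≠ 0 := by linarith
      simp only [inner_sub_left, real_inner_smul_left]
      field_simp
      ring
    rw [← sub_nonneg, this]
    exact mul_nonneg (inv_nonneg.2 hμ.le) (by linarith [hdP y hy])

theorem normalCone_inter_of_nonempty_inter_interior [CompleteSpace E] {K P : Set E}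
    (hK : Convex ℝ K) (hP : Convex ℝ P) (hslater : (P ∩ interior K).Nonempty) {x : E}
    (hxK : x ∈ K) (hxP : x ∈ P) :
    normalCone (K ∩ P) x = normalCone K x + normalCone P x := by
  refine subset_antisymm (fun c hc ↦ ?_) ?_
  · obtain ⟨d, hd, hcd⟩ :=
      exists_sub_mem_normalCone_of_mem_normalCone_inter hK hP hslater hxK hxP hc
    exact ⟨d, hd, c - d, hcd, add_sub_cancel d c⟩
  · rintro _ ⟨c₁, h₁, c₂, h₂, rfl⟩
    exact add_mem_normalCone_inter h₁ h₂

end NormalCone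

theorem conic_lp_normal_cone_general
    {E : Type*} [NormedAddCommGroup E] [InnerProductSpace ℝ E] [FiniteDimensional ℝ E]
    {p q : ℕ} (K : Set E) (hKconv : Convex ℝ K)
    (hKcone : ∀ x ∈ K, ∀ t : ℝ, 0 ≤ t → t • x ∈ K)
    (A : E →ₗ[ℝ] EuclideanSpace ℝ (Fin p)) (B : E →ₗ[ℝ] EuclideanSpace ℝ (Fin q))
    (a : EuclideanSpace ℝ (Fin p)) (b : EuclideanSpace ℝ (Fin q))
    (C : Set E) (hC : C = {x ∈ K | A x = a ∧ ∀ j, B x j ≤ b j})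
    (hSlater : ∃ x ∈ C, x ∈ interior K)
    (xb : E) (hxb : xb ∈ C) :
    normalCone C xb =
      {c | ∃ (y : EuclideanSpace ℝ (Fin p)) (z : EuclideanSpace ℝ (Fin q)) (s : E),
        (∀ j, 0 ≤ z j) ∧ (∀ j, B xb j < b j → z j = 0) ∧
        (∀ x ∈ K, 0 ≤ ⟪s, x⟫) ∧ ⟪s, xb⟫ = 0 ∧
        c = LinearMap.adjoint A y + LinearMap.adjoint B z - s} := by
  replace hC : C = K ∩ polyhedron A B a b := hC
  subst hC
  obtain ⟨x₀, ⟨-, hx₀P⟩, hx₀K⟩ := hSlater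
  obtain ⟨hxbK, hxbP⟩ := hxb
  rw [normalCone_inter_of_nonempty_inter_interior hKconv (convex_polyhedron A B a b)
    ⟨x₀, hx₀P, hx₀K⟩ hxbK hxbP, normalCone_polyhedron A B a b hxbP]
  ext c
  simp only [Set.mem_add, mem_normalCone_of_smul_mem_iff hKcone hxbK, Set.mem_ofPred_eq]
  constructor
  · rintro ⟨c₁, ⟨hc₁K, hc₁x⟩, _, ⟨y, z, hz, hzx, rfl⟩, rfl⟩
    exact ⟨y, z, -c₁, hz, hzx, fun x hx ↦ by simpa using hc₁K x hx, by simp [hc₁x], by abel⟩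
  · rintro ⟨y, z, s, hz, hzx, hs, hsx, rfl⟩
    exact ⟨-s, ⟨fun x hx ↦ by simpa using hs x hx, by simp [hsx]⟩, _, ⟨y, z, hz, hzx, rfl⟩,
      by abel⟩

theorem conic_lp_normal_cone
    {E : Type*} [NormedAddCommGroup E] [InnerProductSpace ℝ E] [FiniteDimensional ℝ E]
    {p q : ℕ} (K : Set E) (hKclosed : IsClosed K) (hKconv : Convex ℝ K)
    (hKcone : ∀ x ∈ K, ∀ t : ℝ, 0 ≤ t → t • x ∈ K)
    (hKpointed : ∀ x ∈ K, -x ∈ K → x = 0)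
    (hKint : (interior K).Nonempty)
    (A : E →ₗ[ℝ] EuclideanSpace ℝ (Fin p)) (B : E →ₗ[ℝ] EuclideanSpace ℝ (Fin q))
    (a : EuclideanSpace ℝ (Fin p)) (b : EuclideanSpace ℝ (Fin q))
    (C : Set E) (hC : C = {x ∈ K | A x = a ∧ ∀ j, B x j ≤ b j})
    (hSlater : ∃ x ∈ C, x ∈ interior K)
    (xb : E) (hxb : xb ∈ C) :
    normalCone C xb =
      {c | ∃ (y : EuclideanSpace ℝ (Fin p)) (z : EuclideanSpace ℝ (Fin q)) (s : E),
        (∀ j, 0 ≤ z j) ∧ (∀ j, B xb j < b j → z j = 0) ∧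
        (∀ x ∈ K, 0 ≤ ⟪s, x⟫) ∧ ⟪s, xb⟫ = 0 ∧
        c = LinearMap.adjoint A y + LinearMap.adjoint B z - s} :=
  conic_lp_normal_cone_general K hKconv hKcone A B a b C hC hSlater xb hxb
end

section
/- Let A : Sym(n) → ℝᵐ and b ∈ ℝᵐ, and C := {X ∈ S₊ⁿ : A(X) = b} contain a positive definite matrix. Suppose for some k ∈ [n−1] there exists a linearly independent set {h₀, h₁, …, h_k} ⊆ ℝⁿ with (h₀ h_iᵀ + h_i h₀ᵀ)/2 ∈ ker(A) for each i ∈ [k]. Then every vertex of C has rank at most n − k. -/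
/-!
If `X ∈ C` had rank `> n - k`, the range of `X` would meet `span {h₁, …, h_k}` in some `w ≠ 0`,
and `D = (h₀ wᵀ + w h₀ᵀ) / 2` would be a nonzero symmetric matrix in `ker A`. As `w` lies in the
range of `X` and `h₀` in the range of a positive definite `X₀ ∈ C`, Cauchy–Schwarz for the two
quadratic forms shows that the curve `X + t D + μ t² (X₀ - X)` stays in `C` for small `|t|`.
So `X` maximizes `t ↦ ⟨c, X + t D + μ t² (X₀ - X)⟩` locally for every normal vector `c`, whence
`⟨c, D⟩ = 0`: the normal cone spans a proper subspace of `Sym(n)` and `X` is no vertex.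
-/

open Matrix

open Filter Topology

section SymOuter

variable {ι : Type*}

noncomputable def symOuter (a : ι → ℝ) : (ι → ℝ) →ₗ[ℝ] Matrix ι ι ℝ where
  toFun b := (1 / 2 : ℝ) • (vecMulVec a b + vecMulVec b a)
  map_add' b c := by
    ext i j
    simp only [vecMulVec_apply, Matrix.smul_apply, Matrix.add_apply, Pi.add_apply, smul_eq_mul]
    ring
  map_smul' r b := by
    ext i j
    simp only [vecMulVec_apply, Matrix.smul_apply, Matrix.add_apply, Pi.smul_apply, smul_eq_mul,
      RingHom.id_apply]
    ring

lemma symOuter_apply_apply (a b : ι → ℝ) (i j : ι) :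
    symOuter a b i j = (a i * b j + b i * a j) / 2 := by
  simp only [symOuter, LinearMap.coe_mk, AddHom.coe_mk, Matrix.smul_apply, Matrix.add_apply,
    vecMulVec_apply, smul_eq_mul]
  ring

lemma isSymm_symOuter (a b : ι → ℝ) : (symOuter a b).IsSymm :=
  IsSymm.ext fun i j => by simp only [symOuter_apply_apply]; ring

lemma symOuter_ne_zero {a b : ι → ℝ} (ha : a ≠ 0) (hb : b ≠ 0) : symOuter a b ≠ 0 := by
  obtain ⟨i, hi⟩ : ∃ i, a i ≠ 0 := Function.ne_iff.mp ha
  obtain ⟨j, hj⟩ : ∃ j, b j ≠ 0 := Function.ne_iff.mp hb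
  intro h
  have hentry : ∀ k l, a k * b l + b k * a l = 0 := fun k l => by
    have := congrFun (congrFun h k) l
    rw [symOuter_apply_apply] at this
    simpa using this
  have hbi : b i = 0 :=
    (mul_eq_zero.mp (by linarith [hentry i i] : a i * b i = 0)).resolve_left hi
  have hbj : a i * b j = 0 := by simpa [hbi] using hentry i j
  exact hj ((mul_eq_zero.mp hbj).resolve_left hi)

lemma dotProduct_mulVec_symOuter [Fintype ι] (a b v : ι → ℝ) :
    v ⬝ᵥ symOuter a b *ᵥ v = (a ⬝ᵥ v) * (b ⬝ᵥ v) := by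
  simp only [symOuter, LinearMap.coe_mk, AddHom.coe_mk, smul_mulVec, add_mulVec,
    vecMulVec_mulVec, dotProduct_smul, dotProduct_add, smul_eq_mul, op_smul_eq_mul]
  rw [dotProduct_comm v a, dotProduct_comm v b]
  ring

end SymOuter

lemma quadratic_perturbation_nonneg {x y p q c₁ c₂ t : ℝ} (hx : 0 ≤ x) (hy : 0 ≤ y)
    (hc₁ : 0 ≤ c₁) (hc₂ : 0 ≤ c₂) (hp : p ^ 2 ≤ c₁ * x) (hq : q ^ 2 ≤ c₂ * y)
    (ht : c₁ * c₂ / 2 * t ^ 2 ≤ 1 / 2) :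
    0 ≤ x + t * (p * q) + t ^ 2 * (c₁ * c₂ / 2) * (y - x) := by
  set s := c₁ * c₂ / 2 * t ^ 2
  have hs : 0 ≤ s := by positivity
  -- `s ≤ 1 / 2` gives `2 s ≤ 4 s (1 - s)`, and AM-GM finishes
  have hsq : (t * (p * q)) ^ 2 ≤ ((1 - s) * x + s * y) ^ 2 :=
    calc (t * (p * q)) ^ 2 = t ^ 2 * (p ^ 2 * q ^ 2) := by ring
      _ ≤ t ^ 2 * ((c₁ * x) * (c₂ * y)) := by gcongr
      _ = 2 * s * (x * y) := by ring
      _ ≤ 4 * ((1 - s) * x) * (s * y) := by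
        nlinarith [mul_nonneg (mul_nonneg hs (mul_nonneg hx hy)) (by linarith : 0 ≤ 1 - 2 * s)]
      _ ≤ ((1 - s) * x + s * y) ^ 2 := by nlinarith [sq_nonneg ((1 - s) * x - s * y)]
  have hlower := (abs_le_of_sq_le_sq' hsq (by nlinarith)).1
  linarith [show t ^ 2 * (c₁ * c₂ / 2) * (y - x) = s * y - s * x by ring]

namespace Matrix.PosSemidef

variable {ι : Type*} [Fintype ι] {M : Matrix ι ι ℝ}

lemma sq_dotProduct_mulVec_le (hM : M.PosSemidef) (u v : ι → ℝ) :
    (u ⬝ᵥ M *ᵥ v) ^ 2 ≤ (u ⬝ᵥ M *ᵥ u) * (v ⬝ᵥ M *ᵥ v) := by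
  have hcomm : v ⬝ᵥ M *ᵥ u = u ⬝ᵥ M *ᵥ v := by
    rw [dotProduct_mulVec, ← mulVec_transpose, isHermitian_iff_isSymm.mp hM.1, dotProduct_comm]
  have hquad : ∀ t : ℝ,
      0 ≤ (v ⬝ᵥ M *ᵥ v) * (t * t) + 2 * (u ⬝ᵥ M *ᵥ v) * t + u ⬝ᵥ M *ᵥ u := fun t => by
    have := hM.dotProduct_mulVec_nonneg (u + t • v)
    simp only [star_trivial, mulVec_add, mulVec_smul, dotProduct_add, add_dotProduct,
      smul_dotProduct, dotProduct_smul, smul_eq_mul, hcomm] at this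
    linarith
  have := discrim_le_zero hquad
  rw [discrim] at this
  nlinarith

lemma exists_sq_dotProduct_le_of_mem_range (hM : M.PosSemidef) {w : ι → ℝ}
    (hw : w ∈ LinearMap.range M.mulVecLin) :
    ∃ c, 0 ≤ c ∧ ∀ v, (w ⬝ᵥ v) ^ 2 ≤ c * (v ⬝ᵥ M *ᵥ v) := by
  obtain ⟨u, rfl⟩ := hw
  refine ⟨u ⬝ᵥ M *ᵥ u, by simpa using hM.dotProduct_mulVec_nonneg u, fun v => ?_⟩
  rw [mulVecLin_apply, dotProduct_comm, dotProduct_mulVec, ← mulVec_transpose,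
    isHermitian_iff_isSymm.mp hM.1, dotProduct_comm]
  exact hM.sq_dotProduct_mulVec_le u v

lemma eventually_add_symOuter {X Y : Matrix ι ι ℝ} (hX : X.PosSemidef) (hY : Y.PosSemidef)
    {a b : ι → ℝ} (ha : a ∈ LinearMap.range Y.mulVecLin) (hb : b ∈ LinearMap.range X.mulVecLin) :
    ∃ μ : ℝ, ∀ᶠ t in 𝓝 (0 : ℝ), (X + t • symOuter a b + t ^ 2 • μ • (Y - X)).PosSemidef := by
  obtain ⟨c₁, hc₁, hb⟩ := hX.exists_sq_dotProduct_le_of_mem_range hb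
  obtain ⟨c₂, hc₂, ha⟩ := hY.exists_sq_dotProduct_le_of_mem_range ha
  refine ⟨c₁ * c₂ / 2, ?_⟩
  have hsmall : ∀ᶠ t in 𝓝 (0 : ℝ), c₁ * c₂ / 2 * t ^ 2 < 1 / 2 :=
    ((continuous_const.mul (continuous_pow 2)).tendsto' 0 0 (by simp)).eventually_lt_const
      (by norm_num)
  filter_upwards [hsmall] with t ht
  refine .of_dotProduct_mulVec_nonneg ?_ fun v => ?_
  · exact hX.1.add (((isHermitian_iff_isSymm.mpr (isSymm_symOuter a b)).smul (.all t)))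
      |>.add (((hY.1.sub hX.1).smul (.all _)).smul (.all _))
  · simp only [star_trivial, add_mulVec, smul_mulVec, sub_mulVec, dotProduct_add,
      dotProduct_smul, dotProduct_sub, smul_eq_mul, dotProduct_mulVec_symOuter]
    have := quadratic_perturbation_nonneg (hX.dotProduct_mulVec_nonneg v)
      (hY.dotProduct_mulVec_nonneg v) hc₁ hc₂ (hb v) (ha v) ht.le
    simp only [star_trivial] at this
    linarith

end Matrix.PosSemidef

lemma trace_mul_eq_zero_of_mem_normalConeM {ι : Type*} [Fintype ι] {C : Set (Matrix ι ι ℝ)}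
    {X D E c : Matrix ι ι ℝ}
    (hcurve : ∀ᶠ t in 𝓝 (0 : ℝ), X + t • D + t ^ 2 • E ∈ C) (hc : c ∈ normalConeM C X) :
    (c * D).trace = 0 := by
  have hmax : IsLocalMax
      (fun t : ℝ => (c * X).trace + t * (c * D).trace + t ^ 2 * (c * E).trace) 0 :=
    hcurve.mono fun t ht => by
      simpa [Matrix.mul_add, Matrix.mul_smul, trace_add, trace_smul] using hc.2 _ ht
  simpa using hmax.hasDerivAt_eq_zero
    ((((hasDerivAt_id' (0 : ℝ)).mul_const (c * D).trace).const_add (c * X).trace).add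
      ((hasDerivAt_pow 2 (0 : ℝ)).mul_const (c * E).trace))

section SymmetricMatrices

variable (ι : Type*)

noncomputable def matrixOfSym2 : (Sym2 ι → ℝ) →ₗ[ℝ] Matrix ι ι ℝ where
  toFun f := Matrix.of fun i j => f s(i, j)
  map_add' _ _ := rfl
  map_smul' _ _ := rfl

variable {ι}

lemma mem_range_matrixOfSym2 {M : Matrix ι ι ℝ} (hM : M.IsSymm) :
    M ∈ LinearMap.range (matrixOfSym2 ι) :=
  ⟨Sym2.lift ⟨fun i j => M i j, fun i j => hM.apply j i⟩, by ext i j; rfl⟩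

variable [Fintype ι]

lemma finrank_range_matrixOfSym2_le :
    Module.finrank ℝ (LinearMap.range (matrixOfSym2 ι)) ≤
      Fintype.card ι * (Fintype.card ι + 1) / 2 := by
  calc _ ≤ Module.finrank ℝ (Sym2 ι → ℝ) := LinearMap.finrank_range_le _
    _ = Fintype.card ι * (Fintype.card ι + 1) / 2 := by
      rw [Module.finrank_fintype_fun_eq_card, Sym2.card, Nat.choose_two_right, mul_comm]
      simp

lemma finrank_span_lt_of_trace_mul_eq_zero {S : Set (Matrix ι ι ℝ)} {D : Matrix ι ι ℝ}
    (hD : D.IsSymm) (hD₀ : D ≠ 0) (hS : ∀ c ∈ S, c.IsSymm ∧ (c * D).trace = 0) :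
    Module.finrank ℝ (Submodule.span ℝ S) < Fintype.card ι * (Fintype.card ι + 1) / 2 := by
  set V := LinearMap.range (matrixOfSym2 ι)
  set K := LinearMap.ker ((traceLinearMap ι ℝ ℝ) ∘ₗ LinearMap.mulRight ℝ D)
  have hspan : Submodule.span ℝ S ≤ V ⊓ K := Submodule.span_le.mpr fun c hc =>
    ⟨mem_range_matrixOfSym2 (hS c hc).1, (hS c hc).2⟩
  have hDK : D ∉ K := by
    have : (Dᴴ * D).trace ≠ 0 := trace_conjTranspose_mul_self_eq_zero_iff.not.mpr hD₀
    rwa [conjTranspose_eq_transpose_of_trivial, hD.eq] at this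
  have hlt : V ⊓ K < V :=
    inf_lt_left.mpr fun hVK => hDK (hVK (mem_range_matrixOfSym2 hD))
  calc _ ≤ Module.finrank ℝ (V ⊓ K : Submodule ℝ (Matrix ι ι ℝ)) := Submodule.finrank_mono hspan
    _ < Module.finrank ℝ V := Submodule.finrank_lt_finrank_of_lt hlt
    _ ≤ _ := finrank_range_matrixOfSym2_le

end SymmetricMatrices

lemma Matrix.exists_ne_zero_mem_range_mulVecLin_inf_span {m n κ : Type*} [Fintype m] [Fintype n]
    [Fintype κ] {X : Matrix m n ℝ} {h : κ → m → ℝ} (hh : LinearIndependent ℝ h)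
    (hrank : Fintype.card m < X.rank + Fintype.card κ) :
    ∃ w ∈ LinearMap.range X.mulVecLin, w ∈ Submodule.span ℝ (Set.range h) ∧ w ≠ 0 := by
  have hdim : ¬ Disjoint (LinearMap.range X.mulVecLin) (Submodule.span ℝ (Set.range h)) :=
    fun hdisj => hrank.not_ge <| by
      simpa [finrank_span_eq_card hh, Matrix.rank] using
        Submodule.finrank_add_finrank_le_of_disjoint hdisj
  simpa [Submodule.disjoint_def] using hdim

theorem vertex_rank_bound_general {n m k : ℕ}
    (A : Fin m → Matrix (Fin n) (Fin n) ℝ)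
    (b : Fin m → ℝ) (C : Set (Matrix (Fin n) (Fin n) ℝ))
    (hC : C = {X | X.PosSemidef ∧ ∀ i, (A i * X).trace = b i})
    (hSlater : ∃ X ∈ C, X.PosDef)
    (h0 : Fin n → ℝ) (h : Fin k → Fin n → ℝ)
    (hli : LinearIndependent ℝ (Fin.cons h0 h : Fin (k + 1) → Fin n → ℝ))
    (hker : ∀ i : Fin k, ∀ j : Fin m,
      (A j * ((1 / 2 : ℝ) • (Matrix.vecMulVec h0 (h i) + Matrix.vecMulVec (h i) h0))).trace
        = 0) :
    ∀ X, IsVertex C X → X.rank ≤ n - k := by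
  subst hC
  rintro X ⟨⟨hX, hXb⟩, hvertex⟩
  by_contra! hrank
  obtain ⟨X₀, ⟨hX₀, hX₀b⟩, hX₀pd⟩ := hSlater
  obtain ⟨w, hwX, hwh, hw₀⟩ := exists_ne_zero_mem_range_mulVecLin_inf_span (X := X)
    (linearIndependent_finCons.mp hli).1 (by simp only [Fintype.card_fin]; omega)
  have hh₀ : h0 ≠ 0 := by simpa using hli.ne_zero 0
  have hh₀X₀ : h0 ∈ LinearMap.range X₀.mulVecLin :=
    mulVec_surjective_iff_isUnit.mpr hX₀pd.isUnit h0
  have hAw : ∀ j, (A j * symOuter h0 w).trace = 0 := fun j =>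
    Submodule.span_le (p := LinearMap.ker
      ((traceLinearMap _ ℝ ℝ) ∘ₗ LinearMap.mulLeft ℝ (A j) ∘ₗ symOuter h0)) |>.mpr
      (Set.range_subset_iff.mpr fun i => hker i j) hwh
  obtain ⟨μ, hμ⟩ := hX.eventually_add_symOuter hX₀ hh₀X₀ hwX
  have hcurve : ∀ᶠ t in 𝓝 (0 : ℝ), X + t • symOuter h0 w + t ^ 2 • μ • (X₀ - X) ∈
      {X | X.PosSemidef ∧ ∀ i, (A i * X).trace = b i} :=
    hμ.mono fun t ht => ⟨ht, fun j => by
      simp [Matrix.mul_add, Matrix.mul_sub, trace_add, trace_sub, hXb j, hX₀b j, hAw j]⟩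
  have := finrank_span_lt_of_trace_mul_eq_zero (isSymm_symOuter h0 w) (symOuter_ne_zero hh₀ hw₀)
    fun c hc => ⟨hc.1, trace_mul_eq_zero_of_mem_normalConeM hcurve hc⟩
  simp only [hvertex, Fintype.card_fin] at this
  exact this.false

theorem vertex_rank_bound {n m k : ℕ} (hk : 1 ≤ k) (hkn : k ≤ n - 1)
    (A : Fin m → Matrix (Fin n) (Fin n) ℝ) (hA : ∀ i, (A i).IsSymm)
    (b : Fin m → ℝ) (C : Set (Matrix (Fin n) (Fin n) ℝ))
    (hC : C = {X | X.PosSemidef ∧ ∀ i, (A i * X).trace = b i})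
    (hSlater : ∃ X ∈ C, X.PosDef)
    (h0 : Fin n → ℝ) (h : Fin k → Fin n → ℝ)
    (hli : LinearIndependent ℝ (Fin.cons h0 h : Fin (k + 1) → Fin n → ℝ))
    (hker : ∀ i : Fin k, ∀ j : Fin m,
      (A j * ((1 / 2 : ℝ) • (Matrix.vecMulVec h0 (h i) + Matrix.vecMulVec (h i) h0))).trace
        = 0) :
    ∀ X, IsVertex C X → X.rank ≤ n - k :=
  vertex_rank_bound_general A b C hC hSlater h0 h hli hker
end

section
/- Let C := {X ∈ S₊^V : trace(X) = 1, X_{ij} ≥ 0 ∀ij ∈ E⁺, X_{ij} ≤ 0 ∀ij ∈ E⁻}. Then every vertex of C is of the form e_k e_kᵀ for some k ∈ V; in particular, every vertex of C has rank one. -/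
open Matrix

/-!
Let `X ∈ C` and let `D = diagonal d` with `tr (D X) = 0`. For small `t` the matrix
`(1 + tD) X (1 + tD)` is again positive semidefinite with the same sign pattern, and its trace is
`1 + t² tr (D X D)`; rescaled to trace one it is a curve in `C` through `X` with velocity
`X D + D X`. Hence every normal vector `c` at `X` satisfies `tr (c (X D + D X)) = 0`. At a vertex
the normal cone spans all symmetric matrices, so `X D + D X = 0`. Taking
`d = X_qq e_p - X_pp e_q` and reading off the `(p, p)` entry gives `X_pp X_qq = 0`, so exactly one
diagonal entry of `X` is nonzero; it equals the trace `1`, and positive semidefiniteness forces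
all other entries to vanish.
-/

open Filter Topology

namespace Matrix

variable {n R : Type*}

variable (n R) in
def symmetricMatrices [CommSemiring R] : Submodule R (Matrix n n R) where
  carrier := {A | A.IsSymm}
  add_mem' := IsSymm.add
  zero_mem' := isSymm_zero
  smul_mem' r _ hA := hA.smul r

def ofSym2 [CommSemiring R] : (Sym2 n → R) →ₗ[R] Matrix n n R where
  toFun f := of fun i j => f s(i, j)
  map_add' _ _ := rfl
  map_smul' _ _ := rfl

lemma IsSymm.mem_range_ofSym2 [CommSemiring R] {A : Matrix n n R} (hA : A.IsSymm) :
    A ∈ LinearMap.range (ofSym2 (n := n) (R := R)) :=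
  ⟨Sym2.lift ⟨fun i j => A i j, fun i j => hA.apply j i⟩, rfl⟩

lemma finrank_symmetricMatrices_le [Fintype n] [Field R] :
    Module.finrank R (symmetricMatrices n R) ≤ Fintype.card n * (Fintype.card n + 1) / 2 := by
  calc Module.finrank R (symmetricMatrices n R)
      ≤ Module.finrank R (LinearMap.range (ofSym2 (n := n) (R := R))) :=
        Submodule.finrank_mono fun _ hA => hA.mem_range_ofSym2
    _ ≤ Module.finrank R (Sym2 n → R) := LinearMap.finrank_range_le _
    _ = Fintype.card n * (Fintype.card n + 1) / 2 := by
        rw [Module.finrank_fintype_fun_eq_card, Sym2.card, Nat.choose_two_right,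
          Nat.add_sub_cancel, Nat.mul_comm]

lemma rank_single_one [Fintype n] [DecidableEq n] [Field R] (k : n) :
    (single k k (1 : R)).rank = 1 := by
  classical
  rw [← diagonal_single, rank_diagonal]
  simp [Pi.single_apply]

open scoped ComplexOrder in
lemma PosSemidef.apply_eq_zero_of_diag_eq_zero {𝕜 : Type*} [Fintype n] [RCLike 𝕜]
    {X : Matrix n n 𝕜} (hX : X.PosSemidef) {i : n} (hi : X i i = 0) (j : n) : X j i = 0 := by
  classical
  have := (hX.dotProduct_mulVec_zero_iff (Pi.single i 1)).1 (by simp [mulVec_single, hi])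
  simpa [mulVec_single] using congrFun this j

variable [Fintype n] [DecidableEq n]

lemma PosSemidef.diagonal_mul_mul_diagonal {X : Matrix n n ℝ} (hX : X.PosSemidef) (w : n → ℝ) :
    (diagonal w * X * diagonal w).PosSemidef := by
  simpa using hX.mul_mul_conjTranspose_same (diagonal w)

lemma PosSemidef.exists_eq_single_of_diag_mul_diag_eq_zero {X : Matrix n n ℝ}
    (hX : X.PosSemidef) (htr : X.trace = 1) (h : ∀ p q, p ≠ q → X p p * X q q = 0) :
    ∃ k, X = single k k 1 := by
  obtain ⟨k, hk⟩ : ∃ k, X k k ≠ 0 := by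
    by_contra! h0
    simp [trace, h0] at htr
  have hzero : ∀ i, i ≠ k → X i i = 0 := fun i hi =>
    (mul_eq_zero.1 (h i k hi)).resolve_right hk
  have hkk : X k k = 1 := by
    rwa [trace, Finset.sum_eq_single (f := X.diag) k (fun i _ hi => hzero i hi) (by simp)] at htr
  refine ⟨k, ext fun i j => ?_⟩
  by_cases hj : j = k
  · by_cases hi : i = k
    · simp [hi, hj, hkk]
    · rw [← hX.1.apply, hX.apply_eq_zero_of_diag_eq_zero (hzero i hi)]
      simp [Ne.symm hi]
  · simp [hX.apply_eq_zero_of_diag_eq_zero (hzero j hj), Ne.symm hj]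

end Matrix

lemma eq_zero_of_eventually_mul_add_mul_sq_nonpos {a b : ℝ}
    (h : ∀ᶠ t in 𝓝 0, a * t + b * t ^ 2 ≤ 0) : a = 0 := by
  have hmax : IsLocalMax (fun t => a * t + b * t ^ 2) 0 := by
    simpa [IsLocalMax, IsMaxFilter] using h
  have hderiv : HasDerivAt (fun t => a * t + b * t ^ 2) a 0 := by
    simpa using ((hasDerivAt_id 0).const_mul a).fun_add ((hasDerivAt_pow 2 0).const_mul b)
  exact hmax.hasDerivAt_eq_zero hderiv

lemma eventually_forall_one_add_mul_pos {ι : Type*} [Finite ι] (d : ι → ℝ) :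
    ∀ᶠ t in 𝓝 (0 : ℝ), ∀ i, 0 < 1 + t * d i :=
  eventually_all.2 fun i =>
    continuousAt_const.eventually_lt (by fun_prop : ContinuousAt (fun t => 1 + t * d i) 0)
      (by simp)

section

variable {V : Type*} [Fintype V]

lemma IsVertex.eq_zero_of_forall_trace_mul_eq_zero {C : Set (Matrix V V ℝ)}
    {X G : Matrix V V ℝ} (hX : IsVertex C X) (hG : G.IsSymm)
    (hGC : ∀ c ∈ normalConeM C X, (c * G).trace = 0) : G = 0 := by
  have hspan : Submodule.span ℝ (normalConeM C X) = symmetricMatrices V ℝ :=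
    Submodule.eq_of_le_of_finrank_le
      (Submodule.span_le.2 fun _ hc => hc.1) (hX.2 ▸ finrank_symmetricMatrices_le)
  let φ : Matrix V V ℝ →ₗ[ℝ] ℝ := (traceLinearMap V ℝ ℝ).comp (LinearMap.mulRight ℝ G)
  have hker : Submodule.span ℝ (normalConeM C X) ≤ LinearMap.ker φ :=
    Submodule.span_le.2 hGC
  have hGG : (G * Gᴴ).trace = 0 := by
    rw [conjTranspose_eq_transpose_of_trivial, hG.eq]
    exact hker (hspan ▸ hG : G ∈ Submodule.span ℝ (normalConeM C X))
  exact trace_mul_conjTranspose_self_eq_zero_iff.1 hGG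

def signedSpectraplex (Ep Em : Set (V × V)) : Set (Matrix V V ℝ) :=
  {X | X.PosSemidef ∧ X.trace = 1 ∧ (∀ e ∈ Ep, 0 ≤ X e.1 e.2) ∧ (∀ e ∈ Em, X e.1 e.2 ≤ 0)}

variable [DecidableEq V] {Ep Em : Set (V × V)}

lemma inv_trace_smul_diagonal_mul_mul_diagonal_mem_signedSpectraplex {X : Matrix V V ℝ}
    (hX : X ∈ signedSpectraplex Ep Em) {w : V → ℝ} (hw : ∀ i, 0 < w i)
    (htr : 0 < (diagonal w * X * diagonal w).trace) :
    (diagonal w * X * diagonal w).trace⁻¹ • (diagonal w * X * diagonal w)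
      ∈ signedSpectraplex Ep Em := by
  obtain ⟨hpsd, -, hp, hm⟩ := hX
  have hentry : ∀ i j, (diagonal w * X * diagonal w) i j = w i * X i j * w j := by
    simp [mul_diagonal, diagonal_mul]
  have hτ := inv_pos.2 htr
  refine ⟨(hpsd.diagonal_mul_mul_diagonal w).smul hτ.le, ?_, fun e he => ?_, fun e he => ?_⟩
  · rw [trace_smul, smul_eq_mul, inv_mul_cancel₀ htr.ne']
  · have := hp e he
    have := hw e.1
    have := hw e.2
    rw [Matrix.smul_apply, hentry, smul_eq_mul]
    positivity
  · rw [Matrix.smul_apply, hentry, smul_eq_mul]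
    exact mul_nonpos_of_nonneg_of_nonpos hτ.le <| mul_nonpos_of_nonpos_of_nonneg
      (mul_nonpos_of_nonneg_of_nonpos (hw _).le (hm e he)) (hw _).le

lemma trace_mul_mul_diagonal_add_diagonal_mul_eq_zero {X c : Matrix V V ℝ}
    (hX : X ∈ signedSpectraplex Ep Em) (hc : c ∈ normalConeM (signedSpectraplex Ep Em) X)
    {d : V → ℝ} (hd : (diagonal d * X).trace = 0) :
    (c * (X * diagonal d + diagonal d * X)).trace = 0 := by
  set D := diagonal d
  set q := (D * X * D).trace
  refine eq_zero_of_eventually_mul_add_mul_sq_nonpos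
    (b := (c * (D * X * D)).trace - (c * X).trace * q) ?_
  -- `tr (c Z) ≤ tr (c X) · tr Z` for `Z = (1 + tD) X (1 + tD)`, expanded in powers of `t`
  filter_upwards [eventually_forall_one_add_mul_pos d] with t ht
  have hexpand : diagonal (fun i => 1 + t * d i) * X * diagonal (fun i => 1 + t * d i)
      = X + t • (X * D + D * X) + t ^ 2 • (D * X * D) := by
    have : diagonal (fun i => 1 + t * d i) = 1 + t • D := by
      rw [← diagonal_one, ← diagonal_smul, diagonal_add]
      rfl
    rw [this]
    simp only [add_mul, mul_add, one_mul, mul_one, smul_mul_assoc, mul_smul_comm, smul_add,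
      smul_smul, Matrix.mul_assoc]
    module
  have htr : (diagonal (fun i => 1 + t * d i) * X * diagonal (fun i => 1 + t * d i)).trace
      = 1 + t ^ 2 * q := by
    rw [hexpand, trace_add, trace_add, trace_smul, trace_smul, trace_add, trace_mul_comm X D, hd,
      hX.2.1]
    simp [q]
  have htr_pos : 0 < 1 + t ^ 2 * q := by
    have := (hX.1.diagonal_mul_mul_diagonal d).trace_nonneg
    positivity
  have hle := hc.2 _ (inv_trace_smul_diagonal_mul_mul_diagonal_mem_signedSpectraplex hX ht
    (htr ▸ htr_pos))
  rw [mul_smul_comm, trace_smul, smul_eq_mul, htr, inv_mul_le_iff₀ htr_pos, hexpand] at hle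
  simp only [mul_add, mul_smul_comm, trace_add, trace_smul, smul_eq_mul] at hle
  rw [mul_add, trace_add]
  linarith

lemma IsVertex.diag_mul_diag_eq_zero {X : Matrix V V ℝ}
    (hX : IsVertex (signedSpectraplex Ep Em) X) {p q : V} (hpq : p ≠ q) :
    X p p * X q q = 0 := by
  set d : V → ℝ := Pi.single p (X q q) - Pi.single q (X p p)
  have hd : (diagonal d * X).trace = 0 := by
    simp [trace, diagonal_mul, d, Pi.single_apply, mul_sub, Finset.sum_sub_distrib, mul_comm]
  have hXsymm : Xᵀ = X := hX.1.1.1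
  have hG : (X * diagonal d + diagonal d * X).IsSymm := by
    simp [IsSymm, transpose_add, transpose_mul, hXsymm, add_comm]
  have h0 := congrFun₂ (hX.eq_zero_of_forall_trace_mul_eq_zero hG fun _ hc =>
    trace_mul_mul_diagonal_add_diagonal_mul_eq_zero hX.1 hc hd) p p
  simp [mul_diagonal, diagonal_mul, d, hpq] at h0
  linarith

end

theorem theta3_vertices_rank_one_general {V : Type*} [Fintype V] [DecidableEq V]
    (Ep Em : Set (V × V))
    (C : Set (Matrix V V ℝ))
    (hC : C = {X | X.PosSemidef ∧ X.trace = 1 ∧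
      (∀ e ∈ Ep, 0 ≤ X e.1 e.2) ∧ (∀ e ∈ Em, X e.1 e.2 ≤ 0)}) :
    ∀ X ∈ C, IsVertex C X →
      (∃ k : V, X = Matrix.vecMulVec (Pi.single k 1) (Pi.single k 1)) ∧ X.rank = 1 := by
  subst hC
  intro X _ hX
  obtain ⟨k, rfl⟩ := hX.1.1.exists_eq_single_of_diag_mul_diag_eq_zero hX.1.2.1
    fun _ _ hpq => IsVertex.diag_mul_diag_eq_zero hX hpq
  exact ⟨⟨k, single_eq_single_vecMulVec_single k k⟩, rank_single_one k⟩

theorem theta3_vertices_rank_one {V : Type*} [Fintype V] [DecidableEq V]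
    (Ep Em : Set (V × V)) (hEp : ∀ e ∈ Ep, e.1 ≠ e.2) (hEm : ∀ e ∈ Em, e.1 ≠ e.2)
    (C : Set (Matrix V V ℝ))
    (hC : C = {X | X.PosSemidef ∧ X.trace = 1 ∧
      (∀ e ∈ Ep, 0 ≤ X e.1 e.2) ∧ (∀ e ∈ Em, X e.1 e.2 ≤ 0)}) :
    ∀ X ∈ C, IsVertex C X →
      (∃ k : V, X = Matrix.vecMulVec (Pi.single k 1) (Pi.single k 1)) ∧ X.rank = 1 :=
  theta3_vertices_rank_one_general Ep Em C hC
end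

section
/- Let C ⊆ E be a compact convex set in a finite-dimensional real inner product space, and C° := {y : ⟨y,x⟩ ≤ 1 ∀x ∈ C} its polar. Then the nonempty exposed faces of C° other than C° itself are exactly the nonempty sets of the form F_x̄ := {y ∈ N_C(x̄) : ⟨y, x̄⟩ = 1} as x̄ ranges over C; moreover, for any such face, relint(F_x̄) = {y ∈ relint(N_C(x̄)) : ⟨y, x̄⟩ = 1}. -/
open RealInnerProductSpace

/-!
By Hahn–Banach, if `⟪·, x⟫ ≤ 1` on the polar `C°` of a closed convex `C` with equality at some
point of `C°`, then `x ∈ C`. A nonempty exposed face of `C°` is the set of maximisers of some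
`⟪·, u⟫`; as `C°` is a neighbourhood of `0`, the maximum is positive unless `u = 0`, i.e. unless
the face is `C°`. Rescaling `u` to `x` with maximum `1` then puts `x` in `C`, and for such `x` the
face `{y ∈ C° | ⟪y, x⟫ = 1}` equals `{y ∈ N_C(x) | ⟪y, x⟫ = 1}`.

For the relative interior: `N_C(x)` is a convex cone meeting the hyperplane `⟪·, x⟫ = 1`, so its
relative interior meets it too (move towards the given point, then rescale), and cutting a convex
set by an affine subspace through its relative interior commutes with taking relative interiors.
-/

section Relint

open Set Filter Topology

variable {E : Type*} [NormedAddCommGroup E] [NormedSpace ℝ E] {s : Set E} {x y : E}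

theorem mem_intrinsicInterior_iff_mem_nhdsWithin :
    x ∈ intrinsicInterior ℝ s ↔ x ∈ s ∧ s ∈ 𝓝[affineSpan ℝ s] x := by
  constructor
  · rintro ⟨⟨y, hy⟩, hint, rfl⟩
    exact ⟨interior_subset (s := ((↑) : affineSpan ℝ s → E) ⁻¹' s) hint,
      preimage_coe_mem_nhds_subtype.1 (mem_interior_iff_mem_nhds.1 hint)⟩
  · rintro ⟨hx, hnhds⟩
    exact ⟨⟨x, subset_affineSpan ℝ s hx⟩,
      mem_interior_iff_mem_nhds.2 (preimage_coe_mem_nhds_subtype.2 hnhds), rfl⟩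

theorem intrinsicInterior_inter_subset (S : AffineSubspace ℝ E) :
    intrinsicInterior ℝ s ∩ S ⊆ intrinsicInterior ℝ (s ∩ S) := by
  rintro x ⟨hx, hxS⟩
  rw [mem_intrinsicInterior_iff_mem_nhdsWithin] at hx ⊢
  have hspan : (affineSpan ℝ (s ∩ S) : Set E) ⊆ affineSpan ℝ s ∩ S := fun z hz =>
    ⟨affineSpan_mono ℝ inter_subset_left hz,
      (affineSpan_le.2 inter_subset_right : affineSpan ℝ (s ∩ S) ≤ S) hz⟩
  refine ⟨⟨hx.1, hxS⟩, nhdsWithin_mono x hspan ?_⟩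
  rw [nhdsWithin_inter]
  exact inter_mem_inf hx.2 self_mem_nhdsWithin

theorem exists_pos_add_smul_sub_mem_of_mem_intrinsicInterior (hy : y ∈ intrinsicInterior ℝ s)
    (hx : x ∈ s) : ∃ ε : ℝ, 0 < ε ∧ y + ε • (y - x) ∈ s := by
  rw [mem_intrinsicInterior_iff_mem_nhdsWithin] at hy
  have hline : Tendsto (fun t : ℝ => y + t • (y - x)) (𝓝 0) (𝓝[affineSpan ℝ s] y) := by
    refine tendsto_nhdsWithin_iff.2 ⟨?_, Eventually.of_forall fun t => ?_⟩
    · exact Continuous.tendsto' (by fun_prop) _ _ (by simp)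
    · have := AffineSubspace.smul_vsub_vadd_mem (affineSpan ℝ s) t
        (subset_affineSpan ℝ s hy.1) (subset_affineSpan ℝ s hx) (subset_affineSpan ℝ s hy.1)
      simpa [vsub_eq_sub, vadd_eq_add, add_comm] using this
  have hpos := (hline.mono_left (nhdsWithin_le_nhds (s := Ioi 0))).eventually hy.2
  exact (hpos.and self_mem_nhdsWithin).exists.imp fun t ht => ⟨ht.2, ht.1⟩

theorem Convex.openSegment_intrinsicInterior_self_subset_intrinsicInterior (hs : Convex ℝ s)
    (hx : x ∈ intrinsicInterior ℝ s) (hy : y ∈ s) :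
    openSegment ℝ x y ⊆ intrinsicInterior ℝ s := by
  rintro p ⟨a, b, ha, hb, hab, rfl⟩
  obtain rfl : b = 1 - a := by linarith
  rw [mem_intrinsicInterior_iff_mem_nhdsWithin] at hx ⊢
  refine ⟨hs hx.1 hy ha.le hb.le (by ring), ?_⟩
  -- pull the relative neighbourhood of `x` back along the homothety at `y` sending the point to `x`
  let h := AffineMap.homothety y a⁻¹
  have hhp : h (a • x + (1 - a) • y) = x := by
    simp only [h, AffineMap.homothety_apply, vsub_eq_sub, vadd_eq_add]
    match_scalars <;> field_simp
    ring
  have hh : Tendsto h (𝓝[affineSpan ℝ s] (a • x + (1 - a) • y)) (𝓝[affineSpan ℝ s] x) := by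
    refine tendsto_nhdsWithin_iff.2 ⟨?_, eventually_mem_nhdsWithin.mono fun q hq => ?_⟩
    · have := (AffineMap.homothety_continuous y a⁻¹).tendsto (a • x + (1 - a) • y)
      rw [hhp] at this
      exact this.mono_left nhdsWithin_le_nhds
    · exact AffineSubspace.smul_vsub_vadd_mem _ _ hq (subset_affineSpan ℝ s hy)
        (subset_affineSpan ℝ s hy)
  filter_upwards [hh.eventually hx.2] with q hq
  have hq' : q = a • h q + (1 - a) • y := by
    simp only [h, AffineMap.homothety_apply, vsub_eq_sub, vadd_eq_add]
    match_scalars <;> field_simp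
    ring
  rw [hq']
  exact hs hq hy ha.le hb.le (by ring)

theorem Convex.intrinsicInterior_inter_affineSubspace (hs : Convex ℝ s) (S : AffineSubspace ℝ E)
    (hsS : (intrinsicInterior ℝ s ∩ S).Nonempty) :
    intrinsicInterior ℝ (s ∩ S) = intrinsicInterior ℝ s ∩ S := by
  refine (Subset.antisymm (fun y hy => ⟨?_, (intrinsicInterior_subset hy).2⟩)
    (intrinsicInterior_inter_subset S))
  obtain ⟨z, hz, hzS⟩ := hsS
  obtain ⟨ε, hε, hw⟩ := exists_pos_add_smul_sub_mem_of_mem_intrinsicInterior hy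
    ⟨intrinsicInterior_subset hz, hzS⟩
  refine hs.openSegment_intrinsicInterior_self_subset_intrinsicInterior hz hw.1
    ⟨ε / (1 + ε), 1 / (1 + ε), by positivity, by positivity, by field_simp; ring, ?_⟩
  match_scalars <;> field_simp
  ring

end Relint

section Cone

open Set

variable {E : Type*} [NormedAddCommGroup E] [NormedSpace ℝ E] [FiniteDimensional ℝ E] {N : Set E}

theorem smul_mem_intrinsicInterior_of_cone (hN : ∀ r : ℝ, 0 < r → ∀ y ∈ N, r • y ∈ N)
    {r : ℝ} (hr : 0 < r) {y : E} (hy : y ∈ intrinsicInterior ℝ N) :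
    r • y ∈ intrinsicInterior ℝ N := by
  let φ := (LinearEquiv.smulOfNeZero ℝ E r hr.ne').toAffineEquiv
  have hφN : φ '' N = N := by
    refine Subset.antisymm (image_subset_iff.2 fun z hz => hN r hr z hz) fun z hz =>
      ⟨r⁻¹ • z, hN _ (inv_pos.2 hr) z hz, ?_⟩
    simp [φ, smul_smul, hr.ne']
  rw [← hφN, AffineEquiv.intrinsicInterior_image]
  exact mem_image_of_mem φ hy

theorem exists_mem_intrinsicInterior_eq_one_of_cone (hN : Convex ℝ N)
    (hcone : ∀ r : ℝ, 0 < r → ∀ y ∈ N, r • y ∈ N) (f : E →ₗ[ℝ] ℝ) {y : E} (hy : y ∈ N)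
    (hfy : f y = 1) : ∃ z ∈ intrinsicInterior ℝ N, f z = 1 := by
  obtain ⟨w, hw⟩ := Set.Nonempty.intrinsicInterior hN ⟨y, hy⟩
  -- a point of `openSegment w y` close enough to `y` for `f` to be positive there
  set θ := (2 + |f w|)⁻¹
  have hθ : 0 < θ := by positivity
  have hθ1 : θ * (2 + |f w|) = 1 := inv_mul_cancel₀ (by positivity)
  set p := θ • w + (1 - θ) • y
  have hp : p ∈ intrinsicInterior ℝ N :=
    hN.openSegment_intrinsicInterior_self_subset_intrinsicInterior hw hy
      ⟨θ, 1 - θ, hθ, by nlinarith [abs_nonneg (f w)], by ring, rfl⟩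
  have hfp : 0 < f p := by
    simp only [p, map_add, map_smul, hfy, smul_eq_mul]
    nlinarith [neg_abs_le (f w)]
  exact ⟨(f p)⁻¹ • p, smul_mem_intrinsicInterior_of_cone hcone (inv_pos.2 hfp) hp,
    by simp [hfp.ne']⟩

theorem intrinsicInterior_sep_eq_one_of_cone (hN : Convex ℝ N)
    (hcone : ∀ r : ℝ, 0 < r → ∀ y ∈ N, r • y ∈ N) (f : E →ₗ[ℝ] ℝ)
    (hF : {y ∈ N | f y = 1}.Nonempty) :
    intrinsicInterior ℝ {y ∈ N | f y = 1} = {y ∈ intrinsicInterior ℝ N | f y = 1} := by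
  let S := (affineSpan ℝ {(1 : ℝ)}).comap f.toAffineMap
  have hS : ∀ s : Set E, {y ∈ s | f y = 1} = s ∩ S := fun s => by ext; simp [S]
  obtain ⟨y, hy, hfy⟩ := hF
  obtain ⟨z, hz, hfz⟩ := exists_mem_intrinsicInterior_eq_one_of_cone hN hcone f hy hfy
  have hzS : z ∈ S := by simp [S, hfz]
  rw [hS, hS, hN.intrinsicInterior_inter_affineSubspace S ⟨z, hz, hzS⟩]

end Cone

section Polar

open Set Filter Topology

variable {E : Type*} [NormedAddCommGroup E] [InnerProductSpace ℝ E] {C A : Set E} {x y : E}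

def innerPolar (C : Set E) : Set E := {y | ∀ x ∈ C, ⟪y, x⟫ ≤ 1}

theorem zero_mem_innerPolar (C : Set E) : (0 : E) ∈ innerPolar C := fun x _ => by simp

theorem innerPolar_mem_nhds_zero (hC : Bornology.IsBounded C) : innerPolar C ∈ 𝓝 (0 : E) := by
  obtain ⟨R, hR, hCR⟩ := hC.exists_pos_norm_le
  refine Filter.mem_of_superset (Metric.ball_mem_nhds 0 (inv_pos.2 hR)) fun y hy x hx => ?_
  rw [mem_ball_zero_iff] at hy
  calc ⟪y, x⟫ ≤ ‖y‖ * ‖x‖ := real_inner_le_norm y x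
    _ ≤ R⁻¹ * R := mul_le_mul hy.le (hCR x hx) (norm_nonneg x) (by positivity)
    _ = 1 := inv_mul_cancel₀ hR.ne'

theorem Convex.mem_of_mem_bipolar_of_inner_eq_one [CompleteSpace E] (hC : Convex ℝ C)
    (hCc : IsClosed C) (hx : ∀ z ∈ innerPolar C, ⟪z, x⟫ ≤ 1) (hy : y ∈ innerPolar C)
    (hyx : ⟪y, x⟫ = 1) : x ∈ C := by
  by_contra hxC
  obtain ⟨f, u, hfC, hfx⟩ := geometric_hahn_banach_closed_point hC hCc hxC
  set w := (InnerProductSpace.toDual ℝ E).symm f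
  have hw : ∀ v, ⟪w, v⟫ = f v := fun v => InnerProductSpace.toDual_symm_apply
  -- tilting `y` towards `w` by a small `t > 0` keeps it in the polar but pushes `⟪·, x⟫` above `1`
  set t := (1 + |u|)⁻¹
  have ht : 0 < t := by positivity
  have htu : 0 < 1 + t * u := by
    have : t * |u| < 1 := by rw [inv_mul_lt_iff₀ (by positivity)]; linarith
    nlinarith [neg_abs_le u]
  set z := (1 + t * u)⁻¹ • (y + t • w)
  have hz : ∀ v, ⟪z, v⟫ = (⟪y, v⟫ + t * f v) / (1 + t * u) := fun v => by
    simp only [z, inner_add_left, real_inner_smul_left, hw, div_eq_inv_mul]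
  have hzC : z ∈ innerPolar C := fun c hc => by
    rw [hz, div_le_one htu]
    nlinarith [hy c hc, hfC c hc]
  have := hx z hzC
  rw [hz, hyx, div_le_one htu] at this
  nlinarith

theorem sep_inner_eq_one_eq_sep_forall_inner_le (hA : ∀ z ∈ A, ⟪z, x⟫ ≤ 1) (hy : y ∈ A)
    (hyx : ⟪y, x⟫ = 1) :
    {z ∈ A | ⟪z, x⟫ = 1} = {z ∈ A | ∀ w ∈ A, ⟪w, x⟫ ≤ ⟪z, x⟫} := by
  ext z
  refine and_congr_right fun hz => ⟨fun hzx w hw => hzx ▸ hA w hw, fun hmax => ?_⟩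
  exact le_antisymm (hA z hz) (hyx ▸ hmax y hy)

theorem isExposed_sep_inner_eq_one (hA : ∀ z ∈ A, ⟪z, x⟫ ≤ 1) :
    IsExposed ℝ A {z ∈ A | ⟪z, x⟫ = 1} := by
  rintro ⟨y, hy, hyx⟩
  refine ⟨innerSL ℝ x, ?_⟩
  rw [sep_inner_eq_one_eq_sep_forall_inner_le hA hy hyx]
  simp only [innerSL_apply_apply, real_inner_comm x]

theorem IsExposed.exists_eq_sep_forall_inner_le [CompleteSpace E] {B : Set E}
    (h : IsExposed ℝ A B) (hB : B.Nonempty) :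
    ∃ u : E, B = {z ∈ A | ∀ w ∈ A, ⟪w, u⟫ ≤ ⟪z, u⟫} := by
  obtain ⟨l, rfl⟩ := h hB
  refine ⟨(InnerProductSpace.toDual ℝ E).symm l, ?_⟩
  simp only [real_inner_comm ((InnerProductSpace.toDual ℝ E).symm l),
    InnerProductSpace.toDual_symm_apply]

theorem sep_normalCone_inner_eq_one (C : Set E) (x : E) :
    {y ∈ normalCone C x | ⟪y, x⟫ = 1} = {y ∈ innerPolar C | ⟪y, x⟫ = 1} := by
  ext y
  refine and_congr_left fun hyx => ?_
  simp only [normalCone, innerPolar, mem_ofPred_eq, hyx]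

theorem convex_normalCone (C : Set E) (x : E) : Convex ℝ (normalCone C x) := by
  intro c₁ h₁ c₂ h₂ a b ha hb _ y hy
  simp only [inner_add_left, real_inner_smul_left]
  exact add_le_add (mul_le_mul_of_nonneg_left (h₁ y hy) ha)
    (mul_le_mul_of_nonneg_left (h₂ y hy) hb)

theorem smul_mem_normalCone {C : Set E} {c : E} {r : ℝ} (hr : 0 ≤ r) (hc : c ∈ normalCone C x) :
    r • c ∈ normalCone C x := fun y hy => by
  simp only [real_inner_smul_left]
  exact mul_le_mul_of_nonneg_left (hc y hy) hr

theorem exists_eq_sep_inner_eq_one_of_isExposed_innerPolar [CompleteSpace E] (hC : Convex ℝ C)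
    (hCc : IsClosed C) (hCb : Bornology.IsBounded C) {F : Set E}
    (hF : IsExposed ℝ (innerPolar C) F) (hFne : F.Nonempty) (hFC : F ≠ innerPolar C) :
    ∃ x ∈ C, F = {y ∈ innerPolar C | ⟪y, x⟫ = 1} := by
  obtain ⟨u, rfl⟩ := hF.exists_eq_sep_forall_inner_le hFne
  obtain ⟨y, hy, hymax⟩ := hFne
  have hm : 0 < ⟪y, u⟫ := by
    -- `0` is an interior point of the polar, so `⟪·, u⟫` is positive somewhere on it unless `u = 0`
    have hlim : Tendsto (fun t : ℝ => t • u) (𝓝[>] 0) (𝓝 0) :=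
      ((continuous_id.smul continuous_const).tendsto' 0 0 (zero_smul ℝ u)).mono_left
        nhdsWithin_le_nhds
    obtain ⟨ε, hεu, hε⟩ :=
      ((hlim.eventually (innerPolar_mem_nhds_zero hCb)).and self_mem_nhdsWithin).exists
    by_contra! hm
    have hu : u = 0 := by
      have := (hymax _ hεu).trans hm
      rw [real_inner_smul_left, real_inner_self_eq_norm_sq] at this
      have : ‖u‖ ^ 2 ≤ 0 := nonpos_of_mul_nonpos_right this hε
      exact norm_eq_zero.1 (by nlinarith [norm_nonneg u])
    subst hu
    simp at hFC
  set m := ⟪y, u⟫ with hm_def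
  clear_value m
  set x := m⁻¹ • u
  have hux : ∀ z, ⟪z, u⟫ = m * ⟪z, x⟫ := fun z => by
    simp only [x, real_inner_smul_right, mul_inv_cancel_left₀ hm.ne']
  have hyx : ⟪y, x⟫ = 1 := by
    simp only [x, real_inner_smul_right, ← hm_def, inv_mul_cancel₀ hm.ne']
  have hx : ∀ z ∈ innerPolar C, ⟪z, x⟫ ≤ 1 := fun z hz => by
    rw [← mul_le_mul_iff_right₀ hm, ← hux, mul_one]
    exact hymax z hz
  refine ⟨x, hC.mem_of_mem_bipolar_of_inner_eq_one hCc hx hy hyx, ?_⟩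
  rw [sep_inner_eq_one_eq_sep_forall_inner_le hx hy hyx]
  simp only [hux, mul_le_mul_iff_right₀ hm]

end Polar

theorem exposed_faces_of_polar
    {E : Type*} [NormedAddCommGroup E] [InnerProductSpace ℝ E] [FiniteDimensional ℝ E]
    (C : Set E) (hconv : Convex ℝ C) (hcomp : IsCompact C)
    (Cp : Set E) (hCp : Cp = {y | ∀ x ∈ C, ⟪y, x⟫ ≤ 1}) :
    (∀ Fc : Set E, Fc.Nonempty →
      ((IsExposed ℝ Cp Fc ∧ Fc ≠ Cp) ↔
        ∃ x ∈ C, Fc = {y ∈ normalCone C x | ⟪y, x⟫ = 1})) ∧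
    (∀ x ∈ C, ({y ∈ normalCone C x | ⟪y, x⟫ = 1} : Set E).Nonempty →
      intrinsicInterior ℝ {y ∈ normalCone C x | ⟪y, x⟫ = 1}
        = {y ∈ intrinsicInterior ℝ (normalCone C x) | ⟪y, x⟫ = 1}) := by
  have := FiniteDimensional.complete ℝ E
  change Cp = innerPolar C at hCp
  subst hCp
  refine ⟨fun F hF => ⟨fun ⟨hexp, hne⟩ => ?_, ?_⟩, fun x _ hFx => ?_⟩
  · obtain ⟨x, hx, rfl⟩ := exists_eq_sep_inner_eq_one_of_isExposed_innerPolar hconv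
      hcomp.isClosed hcomp.isBounded hexp hF hne
    exact ⟨x, hx, (sep_normalCone_inner_eq_one C x).symm⟩
  · rintro ⟨x, hx, rfl⟩
    rw [sep_normalCone_inner_eq_one]
    refine ⟨isExposed_sep_inner_eq_one fun z hz => hz x hx, fun h => ?_⟩
    simpa using ((Set.ext_iff.1 h 0).2 (zero_mem_innerPolar C)).2
  · exact intrinsicInterior_sep_eq_one_of_cone (convex_normalCone C x)
      (fun r hr c hc => smul_mem_normalCone hr.le hc) ((innerₗ E).flip x) hFx
end
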